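/- arXiv:math/0612467 — 8 statements merged into one kernel-verified Lean document; each statement's English description precedes it below -/
import Mathlib

section
/- Let ψ be a forward flow on ℝⁿ which is continuous as a map of (t,x) and satisfies ψ t 0 = 0 for all t ≥ 0. Suppose that for every ρ > 0 there exist t₀ ≥ 0 and functions a, b such that: a is continuous and monotone increasing on [0,ρ] with a(0) = 0; b is continuous and monotone decreasing on [t₀,∞) with b(t) → 0 as t → ∞; and ‖ψ t x‖ ≤ a(‖x‖)·b(t) for all x with ‖x‖ ≤ ρ and all t ≥ t₀. Then the origin 0 is globally asymptotically stable for ψ. -/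
/-!
Stability splits into two time regimes. On the compact interval `[0, t₀]`, joint continuity
of the flow and `ψ t 0 = 0` give, by the tube lemma, a neighbourhood of `0` whose orbits stay
`ε`-close to `0`; for `t ≥ t₀` the bound `‖ψ t x‖ ≤ |a ‖x‖| * b t₀` is small because `a` is
continuous at `0` with `a 0 = 0`. Attractivity on a compact set inside the ball of radius `ρ`
follows from `‖ψ t x‖ ≤ a ρ * b t → 0`, by monotonicity of `a`.
-/

open Set Filter Topology Metric

lemma AntitoneOn.nonneg_of_tendsto_zero {b : ℝ → ℝ} {t₀ : ℝ} (hb : AntitoneOn b (Ici t₀))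
    (hlim : Tendsto b atTop (𝓝 0)) {t : ℝ} (ht : t₀ ≤ t) : 0 ≤ b t := by
  refine le_of_tendsto hlim ?_
  filter_upwards [eventually_ge_atTop t] with s hs
  exact hb ht (ht.trans hs) hs

section Flow

variable {E : Type*} [SeminormedAddCommGroup E] {ψ : ℝ → E → E}

lemma eventually_forall_norm_flow_lt (hcont : Continuous fun p : ℝ × E => ψ p.1 p.2)
    {K : Set ℝ} (hK : IsCompact K) (hzero : ∀ t ∈ K, ψ t 0 = 0) {ε : ℝ} (hε : 0 < ε) :
    ∀ᶠ x in 𝓝 (0 : E), ∀ t ∈ K, ‖ψ t x‖ < ε := by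
  refine hK.eventually_forall_of_forall_eventually fun t ht => ?_
  have hcont' : Continuous fun z : E × ℝ => ‖ψ z.2 z.1‖ :=
    continuous_norm.comp (hcont.comp continuous_swap)
  exact hcont'.continuousAt.eventually_lt continuousAt_const (by simpa [hzero t ht] using hε)

variable {ρ t₀ ε : ℝ} {a b : ℝ → ℝ}
  (hψab : ∀ x : E, ‖x‖ ≤ ρ → ∀ t ≥ t₀, ‖ψ t x‖ ≤ a ‖x‖ * b t)
  (hbanti : AntitoneOn b (Ici t₀)) (hblim : Tendsto b atTop (𝓝 0))
include hψab hbanti hblim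

lemma eventually_forall_ge_norm_flow_le (hρ : 0 < ρ) (hac : ContinuousOn a (Icc 0 ρ))
    (ha0 : a 0 = 0) (hε : 0 < ε) :
    ∀ᶠ x in 𝓝 (0 : E), ∀ t ≥ t₀, ‖ψ t x‖ ≤ ε := by
  have hnorm : Tendsto (fun x : E => ‖x‖) (𝓝 0) (𝓝[Icc 0 ρ] 0) := by
    refine tendsto_nhdsWithin_iff.2 ⟨by simpa using (continuous_norm (E := E)).tendsto 0, ?_⟩
    filter_upwards [closedBall_mem_nhds (0 : E) hρ] with x hx
    exact ⟨norm_nonneg x, mem_closedBall_zero_iff.1 hx⟩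
  have ha : Tendsto (fun x : E => |a ‖x‖| * b t₀) (𝓝 0) (𝓝 0) := by
    have := ((hac 0 ⟨le_rfl, hρ.le⟩).tendsto.comp hnorm).abs.mul_const (b t₀)
    simpa [ha0] using this
  filter_upwards [ha.eventually (ge_mem_nhds hε), closedBall_mem_nhds (0 : E) hρ]
    with x hsmall hx t ht
  have hbt := hbanti.nonneg_of_tendsto_zero hblim ht
  calc ‖ψ t x‖ ≤ a ‖x‖ * b t := hψab x (mem_closedBall_zero_iff.1 hx) t ht
    _ ≤ |a ‖x‖| * b t := mul_le_mul_of_nonneg_right (le_abs_self _) hbt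
    _ ≤ |a ‖x‖| * b t₀ :=
        mul_le_mul_of_nonneg_left (hbanti self_mem_Ici ht ht) (abs_nonneg _)
    _ ≤ ε := hsmall

lemma eventually_forall_norm_flow_le (hamono : MonotoneOn a (Icc 0 ρ)) (hε : 0 < ε) :
    ∀ᶠ t in atTop, ∀ x : E, ‖x‖ ≤ ρ → ‖ψ t x‖ ≤ ε := by
  have hlim : Tendsto (fun t => a ρ * b t) atTop (𝓝 0) := by
    simpa using hblim.const_mul (a ρ)
  filter_upwards [hlim.eventually (ge_mem_nhds hε), eventually_ge_atTop t₀]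
    with t hsmall ht x hx
  have hρ : ρ ∈ Icc 0 ρ := ⟨(norm_nonneg x).trans hx, le_rfl⟩
  calc ‖ψ t x‖ ≤ a ‖x‖ * b t := hψab x hx t ht
    _ ≤ a ρ * b t := mul_le_mul_of_nonneg_right (hamono ⟨norm_nonneg x, hx⟩ hρ hx)
        (hbanti.nonneg_of_tendsto_zero hblim ht)
    _ ≤ ε := hsmall

end Flow

theorem stmt_0_general (n : ℕ)
    (ψ : ℝ → EuclideanSpace ℝ (Fin n) → EuclideanSpace ℝ (Fin n))
    (hcont : Continuous (fun p : ℝ × EuclideanSpace ℝ (Fin n) => ψ p.1 p.2))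
    (hzero : ∀ t ≥ (0:ℝ), ψ t 0 = 0)
    (hbound : ∀ ρ > (0:ℝ), ∃ t₀ ≥ (0:ℝ), ∃ a b : ℝ → ℝ,
      ContinuousOn a (Set.Icc 0 ρ) ∧ MonotoneOn a (Set.Icc 0 ρ) ∧ a 0 = 0 ∧
      ContinuousOn b (Set.Ici t₀) ∧ AntitoneOn b (Set.Ici t₀) ∧
      Filter.Tendsto b Filter.atTop (nhds 0) ∧
      ∀ x : EuclideanSpace ℝ (Fin n), ‖x‖ ≤ ρ → ∀ t ≥ t₀, ‖ψ t x‖ ≤ a ‖x‖ * b t) :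
    (∀ ε > (0:ℝ), ∃ δ > (0:ℝ), ∀ x : EuclideanSpace ℝ (Fin n), ‖x‖ ≤ δ →
        ∀ t ≥ (0:ℝ), ‖ψ t x‖ ≤ ε) ∧
    (∀ K : Set (EuclideanSpace ℝ (Fin n)), IsCompact K → ∀ ε > (0:ℝ),
        ∃ T > (0:ℝ), ∀ t ≥ T, ∀ x ∈ K, ‖ψ t x‖ ≤ ε) := by
  constructor
  · intro ε hε
    obtain ⟨t₀, -, a, b, hac, -, ha0, -, hbanti, hblim, hψab⟩ := hbound 1 one_pos
    have hsmall := (eventually_forall_norm_flow_lt hcont (isCompact_Icc (b := t₀))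
      (fun t ht => hzero t ht.1) hε).and
      (eventually_forall_ge_norm_flow_le hψab hbanti hblim one_pos hac ha0 hε)
    obtain ⟨δ, hδ, hball⟩ := eventually_nhds_iff_ball.1 hsmall
    refine ⟨δ / 2, half_pos hδ, fun x hx t ht => ?_⟩
    obtain ⟨hearly, hlate⟩ := hball x (mem_ball_zero_iff.2 (hx.trans_lt (half_lt_self hδ)))
    rcases le_total t t₀ with h | h
    · exact (hearly t ⟨ht, h⟩).le
    · exact hlate t h
  · intro K hK ε hε
    obtain ⟨r, hr⟩ := hK.isBounded.subset_closedBall 0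
    obtain ⟨t₀, -, a, b, -, hamono, -, -, hbanti, hblim, hψab⟩ :=
      hbound (max r 1) (by positivity)
    obtain ⟨T, hT⟩ :=
      eventually_atTop.1 (eventually_forall_norm_flow_le hψab hbanti hblim hamono hε)
    refine ⟨max T 1, by positivity, fun t ht x hx => hT t (le_of_max_le_left ht) x ?_⟩
    exact (mem_closedBall_zero_iff.1 (hr hx)).trans (le_max_left _ _)

/-- A Hahn-type criterion for global asymptotic stability of the
origin for a forward flow `ψ` on ℝⁿ. -/
theorem stmt_0 (n : ℕ) (hn : 1 ≤ n)
    (ψ : ℝ → EuclideanSpace ℝ (Fin n) → EuclideanSpace ℝ (Fin n))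
    (hcont : Continuous (fun p : ℝ × EuclideanSpace ℝ (Fin n) => ψ p.1 p.2))
    (hψ0 : ∀ x, ψ 0 x = x)
    (hzero : ∀ t ≥ (0:ℝ), ψ t 0 = 0)
    (hbound : ∀ ρ > (0:ℝ), ∃ t₀ ≥ (0:ℝ), ∃ a b : ℝ → ℝ,
      ContinuousOn a (Set.Icc 0 ρ) ∧ MonotoneOn a (Set.Icc 0 ρ) ∧ a 0 = 0 ∧
      ContinuousOn b (Set.Ici t₀) ∧ AntitoneOn b (Set.Ici t₀) ∧
      Filter.Tendsto b Filter.atTop (nhds 0) ∧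
      ∀ x : EuclideanSpace ℝ (Fin n), ‖x‖ ≤ ρ → ∀ t ≥ t₀, ‖ψ t x‖ ≤ a ‖x‖ * b t) :
    (∀ ε > (0:ℝ), ∃ δ > (0:ℝ), ∀ x : EuclideanSpace ℝ (Fin n), ‖x‖ ≤ δ →
        ∀ t ≥ (0:ℝ), ‖ψ t x‖ ≤ ε) ∧
    (∀ K : Set (EuclideanSpace ℝ (Fin n)), IsCompact K → ∀ ε > (0:ℝ),
        ∃ T > (0:ℝ), ∀ t ≥ T, ∀ x ∈ K, ‖ψ t x‖ ≤ ε) :=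
  stmt_0_general n ψ hcont hzero hbound
end

section
/- Let a ≤ b be nonzero reals, α : Fin n → ℝ with a ≤ αᵢ ≤ b for all i, and let Z₁ : ℝⁿ → ℝⁿ be continuous with ‖Z₁(x)‖ ≤ c₀ for all x ∈ ℝⁿ, where c₀ > 0. Let Y₁ be the vector field Y₁(x)ᵢ = αᵢ xᵢ + Z₁(x)ᵢ and let ψ be a forward flow of Y₁. Then for all x ∈ ℝⁿ and all t ≥ 0: (‖x‖ − c₀/a)·e^{a t} + c₀/a ≤ ‖ψ t x‖ ≤ (‖x‖ + c₀/b)·e^{b t} − c₀/b. -/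
/-!
Write `φ s = ψ s x`. Away from zero, `‖φ‖` is differentiable with derivative
`⟪φ, Y₁ φ⟫ / ‖φ‖`, and at a zero its right derivative is `‖Y₁ φ‖`. Splitting
`⟪u, Y₁ u⟫ = ∑ αᵢ uᵢ² + ⟪u, Z₁ u⟫` and using `a ≤ αᵢ ≤ b`, `‖Z₁‖ ≤ c₀` shows that this right
derivative lies between `a ‖φ‖ - c₀` and `b ‖φ‖ + c₀`. Grönwall's inequality, applied to `‖φ‖`
and to `-‖φ‖`, gives the two bounds.
-/

open Filter Set Real
open scoped Topology RealInnerProductSpace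

section NormRightDeriv

variable {E : Type*} [NormedAddCommGroup E] [InnerProductSpace ℝ E]

open Classical in
noncomputable def normRightDeriv (u v : E) : ℝ :=
  if u = 0 then ‖v‖ else ⟪u, v⟫ / ‖u‖

theorem HasDerivAt.norm_of_ne_zero {φ : ℝ → E} {v : E} {s : ℝ} (hφ : HasDerivAt φ v s)
    (h0 : φ s ≠ 0) : HasDerivAt (fun z => ‖φ z‖) (⟪φ s, v⟫ / ‖φ s‖) s := by
  have hpos : 0 < ‖φ s‖ := norm_pos_iff.mpr h0
  have hsqrt := hφ.norm_sq.sqrt (pow_ne_zero 2 hpos.ne')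
  simp only [sqrt_sq (norm_nonneg _)] at hsqrt
  convert hsqrt using 1
  field_simp

theorem HasDerivAt.tendsto_slope_norm_nhdsGT {φ : ℝ → E} {v : E} {s : ℝ}
    (hφ : HasDerivAt φ v s) :
    Tendsto (slope (fun z => ‖φ z‖) s) (𝓝[>] s) (𝓝 (normRightDeriv (φ s) v)) := by
  by_cases h0 : φ s = 0
  · have hslope : Tendsto (fun z => ‖slope φ s z‖) (𝓝[>] s) (𝓝 ‖v‖) :=
      ((hasDerivAt_iff_tendsto_slope.mp hφ).mono_left
        (nhdsWithin_mono s fun z hz => ne_of_gt hz)).norm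
    rw [normRightDeriv, if_pos h0]
    refine hslope.congr' ?_
    filter_upwards [self_mem_nhdsWithin] with z (hz : s < z)
    rw [slope_def_module, slope_def_field, norm_smul, norm_inv, norm_of_nonneg (sub_pos.mpr hz).le,
      h0, sub_zero, norm_zero, sub_zero, div_eq_inv_mul]
  · rw [normRightDeriv, if_neg h0]
    exact ((hφ.norm_of_ne_zero h0).tendsto_slope).mono_left
      (nhdsWithin_mono s fun z hz => ne_of_gt hz)

variable {φ v : ℝ → E} {K ε a b : ℝ}

theorem norm_le_gronwallBound_of_normRightDeriv_le (hφc : ContinuousOn φ (Icc a b))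
    (hφ : ∀ s ∈ Ico a b, HasDerivAt φ (v s) s)
    (bound : ∀ s ∈ Ico a b, normRightDeriv (φ s) (v s) ≤ K * ‖φ s‖ + ε) :
    ∀ s ∈ Icc a b, ‖φ s‖ ≤ gronwallBound ‖φ a‖ K ε (s - a) :=
  le_gronwallBound_of_liminf_deriv_right_le hφc.norm
    (fun s hs _ hr => ((hφ s hs).tendsto_slope_norm_nhdsGT.eventually (gt_mem_nhds hr)).frequently)
    le_rfl bound

theorem neg_norm_le_gronwallBound_of_le_normRightDeriv (hφc : ContinuousOn φ (Icc a b))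
    (hφ : ∀ s ∈ Ico a b, HasDerivAt φ (v s) s)
    (bound : ∀ s ∈ Ico a b, K * ‖φ s‖ - ε ≤ normRightDeriv (φ s) (v s)) :
    ∀ s ∈ Icc a b, -‖φ s‖ ≤ gronwallBound (-‖φ a‖) K ε (s - a) :=
  le_gronwallBound_of_liminf_deriv_right_le hφc.norm.neg
    (fun s hs _ hr => (((hφ s hs).tendsto_slope_norm_nhdsGT.neg).eventually
      (gt_mem_nhds hr)).frequently.mono fun z hz => by
        rw [slope_def_field] at hz; exact lt_of_eq_of_lt (by ring) hz)
    le_rfl fun s hs => by linarith [bound s hs]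

end NormRightDeriv

section DiagonalPlusPerturbation

variable {ι : Type*} [Fintype ι] {α : ι → ℝ} {a b : ℝ} {u y z : EuclideanSpace ℝ ι}

theorem EuclideanSpace.sum_mul_sq_le (hα : ∀ i, α i ≤ b) (u : EuclideanSpace ℝ ι) :
    ∑ i, α i * u i ^ 2 ≤ b * ‖u‖ ^ 2 := by
  rw [u.real_norm_sq_eq, Finset.mul_sum]
  exact Finset.sum_le_sum fun i _ => mul_le_mul_of_nonneg_right (hα i) (sq_nonneg _)

theorem EuclideanSpace.le_sum_mul_sq (hα : ∀ i, a ≤ α i) (u : EuclideanSpace ℝ ι) :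
    a * ‖u‖ ^ 2 ≤ ∑ i, α i * u i ^ 2 := by
  rw [u.real_norm_sq_eq, Finset.mul_sum]
  exact Finset.sum_le_sum fun i _ => mul_le_mul_of_nonneg_right (hα i) (sq_nonneg _)

theorem EuclideanSpace.inner_eq_sum_mul_sq_add (hy : ∀ i, y i = α i * u i + z i) :
    ⟪u, y⟫ = ∑ i, α i * u i ^ 2 + ⟪u, z⟫ := by
  simp only [PiLp.inner_apply, RCLike.inner_apply, conj_trivial, hy, ← Finset.sum_add_distrib]
  exact Finset.sum_congr rfl fun i _ => by ring

theorem EuclideanSpace.normRightDeriv_le (hy : ∀ i, y i = α i * u i + z i)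
    (hα : ∀ i, α i ≤ b) : normRightDeriv u y ≤ b * ‖u‖ + ‖z‖ := by
  rw [normRightDeriv]
  split_ifs with h0
  · have : y = z := by ext i; simp [hy, h0]
    simp [this, h0]
  · have hpos : 0 < ‖u‖ := norm_pos_iff.mpr h0
    rw [div_le_iff₀ hpos, inner_eq_sum_mul_sq_add hy]
    nlinarith [sum_mul_sq_le hα u, real_inner_le_norm u z]

theorem EuclideanSpace.le_normRightDeriv (hy : ∀ i, y i = α i * u i + z i)
    (hα : ∀ i, a ≤ α i) : a * ‖u‖ - ‖z‖ ≤ normRightDeriv u y := by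
  rw [normRightDeriv]
  split_ifs with h0
  · rw [h0, norm_zero, mul_zero, zero_sub]
    exact (neg_nonpos.mpr (norm_nonneg z)).trans (norm_nonneg y)
  · have hpos : 0 < ‖u‖ := norm_pos_iff.mpr h0
    rw [le_div_iff₀ hpos, inner_eq_sum_mul_sq_add hy]
    nlinarith [le_sum_mul_sq hα u, neg_le_of_abs_le (abs_real_inner_le_norm u z)]

end DiagonalPlusPerturbation

theorem stmt_1_general (n : ℕ) (a b c₀ : ℝ) (ha : a ≠ 0) (hb : b ≠ 0)
    (α : Fin n → ℝ) (hα : ∀ i, a ≤ α i ∧ α i ≤ b)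
    (Z₁ : EuclideanSpace ℝ (Fin n) → EuclideanSpace ℝ (Fin n))
    (hZ : ∀ x, ‖Z₁ x‖ ≤ c₀)
    (Y₁ : EuclideanSpace ℝ (Fin n) → EuclideanSpace ℝ (Fin n))
    (hY₁ : ∀ x i, Y₁ x i = α i * x i + Z₁ x i)
    (ψ : ℝ → EuclideanSpace ℝ (Fin n) → EuclideanSpace ℝ (Fin n))
    (hψ0 : ∀ x, ψ 0 x = x)
    (hψ : ∀ t ≥ (0:ℝ), ∀ x, HasDerivAt (fun s => ψ s x) (Y₁ (ψ t x)) t) :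
    ∀ x : EuclideanSpace ℝ (Fin n), ∀ t ≥ (0:ℝ),
      (‖x‖ - c₀ / a) * Real.exp (a * t) + c₀ / a ≤ ‖ψ t x‖ ∧
      ‖ψ t x‖ ≤ (‖x‖ + c₀ / b) * Real.exp (b * t) - c₀ / b := by
  intro x t ht
  have hderiv : ∀ s ∈ Ico 0 t, HasDerivAt (fun s => ψ s x) (Y₁ (ψ s x)) s :=
    fun s hs => hψ s hs.1 x
  have hcont : ContinuousOn (fun s => ψ s x) (Icc 0 t) :=
    fun s hs => (hψ s hs.1 x).continuousAt.continuousWithinAt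
  have hlower := neg_norm_le_gronwallBound_of_le_normRightDeriv (K := a) (ε := c₀) hcont hderiv
    (fun s _ => (sub_le_sub_left (hZ _) _).trans
      (EuclideanSpace.le_normRightDeriv (hY₁ (ψ s x)) fun i => (hα i).1)) t (right_mem_Icc.mpr ht)
  have hupper := norm_le_gronwallBound_of_normRightDeriv_le (K := b) (ε := c₀) hcont hderiv
    (fun s _ => (EuclideanSpace.normRightDeriv_le (hY₁ (ψ s x)) fun i => (hα i).2).trans
      (add_le_add_right (hZ _) _)) t (right_mem_Icc.mpr ht)
  simp only [gronwallBound_of_K_ne_0 ha, gronwallBound_of_K_ne_0 hb, hψ0, sub_zero] at hlower hupper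
  constructor <;> linarith

/-- Estimates for the flow of a bounded perturbation of a linear
vector field `Y₁(x)ᵢ = αᵢ xᵢ + Z₁(x)ᵢ` with `‖Z₁(x)‖ ≤ c₀`. -/
theorem stmt_1 (n : ℕ) (hn : 1 ≤ n) (a b c₀ : ℝ) (hab : a ≤ b) (ha : a ≠ 0) (hb : b ≠ 0)
    (α : Fin n → ℝ) (hα : ∀ i, a ≤ α i ∧ α i ≤ b)
    (Z₁ : EuclideanSpace ℝ (Fin n) → EuclideanSpace ℝ (Fin n))
    (hZcont : Continuous Z₁) (hc₀ : 0 < c₀) (hZ : ∀ x, ‖Z₁ x‖ ≤ c₀)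
    (Y₁ : EuclideanSpace ℝ (Fin n) → EuclideanSpace ℝ (Fin n))
    (hY₁ : ∀ x i, Y₁ x i = α i * x i + Z₁ x i)
    (ψ : ℝ → EuclideanSpace ℝ (Fin n) → EuclideanSpace ℝ (Fin n))
    (hψ0 : ∀ x, ψ 0 x = x)
    (hψ : ∀ t ≥ (0:ℝ), ∀ x, HasDerivAt (fun s => ψ s x) (Y₁ (ψ t x)) t) :
    ∀ x : EuclideanSpace ℝ (Fin n), ∀ t ≥ (0:ℝ),
      (‖x‖ - c₀ / a) * Real.exp (a * t) + c₀ / a ≤ ‖ψ t x‖ ∧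
      ‖ψ t x‖ ≤ (‖x‖ + c₀ / b) * Real.exp (b * t) - c₀ / b :=
  stmt_1_general n a b c₀ ha hb α hα Z₁ hZ Y₁ hY₁ ψ hψ0 hψ
end

section
/- Let a ≤ αᵢ ≤ b < 0, a′ ≤ βᵢ ≤ b′ ≤ 0, and let each mᵢ be an even positive integer. Define φ : ℝ → ℝⁿ → ℝⁿ coordinatewise by (φ t x)ᵢ = xᵢ e^{αᵢ t} (1 + (βᵢ/αᵢ) xᵢ^{mᵢ} (1 − e^{αᵢ mᵢ t}))^{−1/mᵢ}. Then for every t ≥ 0, φ is a forward flow of the vector field X₃(x)ᵢ = αᵢ xᵢ + βᵢ xᵢ^{1+mᵢ}, i.e. φ 0 x = x and (d/ds)(φ s x)ᵢ at s = t equals αᵢ(φ t x)ᵢ + βᵢ(φ t x)ᵢ^{1+mᵢ}; moreover ‖φ t x‖ ≤ ‖x‖ e^{b t} for all t ≥ 0 and all x ∈ ℝⁿ. -/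
/-! Each coordinate solves the Bernoulli equation `y' = α y + β y^{1+m}`: the substitution
`u = y^{-m}` makes it linear, and solving that linear equation gives the formula for `φ`.
When `α < 0`, `β ≤ 0` and `m` is even, the bracket `1 + (β/α) x^m (1 - e^{α m t})` is at least `1`
for `t ≥ 0`, so its negative power is at most `1` and each coordinate is dominated by
`|xᵢ| e^{αᵢ t} ≤ |xᵢ| e^{b t}`. -/

open Real

namespace BernoulliFlow

noncomputable def denom (α β : ℝ) (m : ℕ) (x t : ℝ) : ℝ :=
  1 + β / α * x ^ m * (1 - exp (α * m * t))

noncomputable def flow (α β : ℝ) (m : ℕ) (x t : ℝ) : ℝ :=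
  x * exp (α * t) * denom α β m x t ^ (-(1 : ℝ) / m)

variable {α β : ℝ} {m : ℕ} {x t : ℝ}

@[simp]
lemma flow_zero : flow α β m x 0 = x := by
  simp [flow, denom]

lemma one_le_denom (hα : α ≤ 0) (hβ : β ≤ 0) (hm : Even m) (ht : 0 ≤ t) :
    1 ≤ denom α β m x t := by
  have hc : 0 ≤ β / α * x ^ m := mul_nonneg (div_nonneg_of_nonpos hβ hα) (hm.pow_nonneg x)
  have hexp : exp (α * m * t) ≤ 1 :=
    exp_le_one_iff.mpr (mul_nonpos_of_nonpos_of_nonneg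
      (mul_nonpos_of_nonpos_of_nonneg hα m.cast_nonneg) ht)
  unfold denom
  nlinarith

lemma hasDerivAt_denom :
    HasDerivAt (fun s => denom α β m x s) (-(β / α * x ^ m * (α * m * exp (α * m * t)))) t := by
  have hexp : HasDerivAt (fun s => exp (α * m * s)) (exp (α * m * t) * (α * m)) t := by
    simpa using ((hasDerivAt_id t).const_mul (α * m)).exp
  exact (((hexp.const_sub 1).const_mul (β / α * x ^ m)).const_add 1).congr_deriv (by ring)

/-- From `(denom ^ (-1/m)) ^ m = denom⁻¹`; this turns the derivative of the power into the
nonlinear term `β y^{1+m}`. -/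
lemma flow_pow_succ (hm : m ≠ 0) (hG : 0 < denom α β m x t) :
    flow α β m x t ^ (1 + m) =
      flow α β m x t * x ^ m * exp (α * m * t) / denom α β m x t := by
  set G := denom α β m x t
  have hPm : (G ^ (-(1 : ℝ) / m)) ^ m = G⁻¹ := by
    rw [← rpow_natCast, ← rpow_mul hG.le, div_mul_cancel₀ _ (Nat.cast_ne_zero.mpr hm),
      rpow_neg_one]
  have hEm : exp (α * t) ^ m = exp (α * m * t) := by
    rw [← exp_nat_mul]
    congr 1
    ring
  rw [pow_add, pow_one, flow, mul_pow, mul_pow, hPm, hEm]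
  ring

lemma hasDerivAt_flow (hα : α ≠ 0) (hm : m ≠ 0) (hG : 0 < denom α β m x t) :
    HasDerivAt (fun s => flow α β m x s)
      (α * flow α β m x t + β * flow α β m x t ^ (1 + m)) t := by
  have hexp : HasDerivAt (fun s => exp (α * s)) (exp (α * t) * α) t := by
    simpa using ((hasDerivAt_id t).const_mul α).exp
  have hpow := hasDerivAt_denom.rpow_const (p := -(1 : ℝ) / m) (Or.inl hG.ne')
  refine ((hexp.const_mul x).mul hpow).congr_deriv ?_
  rw [flow_pow_succ hm hG, rpow_sub hG, rpow_one, flow]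
  field_simp

lemma abs_flow_le (hG : 1 ≤ denom α β m x t) :
    |flow α β m x t| ≤ |x| * exp (α * t) := by
  have hP : denom α β m x t ^ (-(1 : ℝ) / m) ≤ 1 :=
    rpow_le_one_of_one_le_of_nonpos hG (by rw [neg_div]; exact neg_nonpos.mpr (by positivity))
  have hP0 : 0 ≤ denom α β m x t ^ (-(1 : ℝ) / m) := rpow_nonneg (by linarith) _
  rw [flow, abs_mul, abs_mul, abs_of_pos (exp_pos _), abs_of_nonneg hP0]
  exact mul_le_of_le_one_right (by positivity) hP

end BernoulliFlow

lemma EuclideanSpace.norm_le_mul_of_abs_le {ι : Type*} [Fintype ι]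
    {x y : EuclideanSpace ℝ ι} {c : ℝ} (hc : 0 ≤ c) (h : ∀ i, |y i| ≤ |x i| * c) :
    ‖y‖ ≤ ‖x‖ * c := by
  have hsq : ‖y‖ ^ 2 ≤ (‖x‖ * c) ^ 2 := by
    rw [mul_pow, EuclideanSpace.real_norm_sq_eq, EuclideanSpace.real_norm_sq_eq, Finset.sum_mul]
    gcongr with i
    simpa [mul_pow] using pow_le_pow_left₀ (abs_nonneg _) (h i) 2
  exact le_of_sq_le_sq (by simpa [abs_of_nonneg (mul_nonneg (norm_nonneg x) hc)] using hsq)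
    (by positivity)

open BernoulliFlow in
theorem stmt_4_general (n : ℕ) (a b a' b' : ℝ) (hb : b < 0) (hb' : b' ≤ 0)
    (α β : Fin n → ℝ) (hα : ∀ i, a ≤ α i ∧ α i ≤ b) (hβ : ∀ i, a' ≤ β i ∧ β i ≤ b')
    (m : Fin n → ℕ) (hme : ∀ i, Even (m i)) (hmp : ∀ i, 0 < m i)
    (φ : ℝ → EuclideanSpace ℝ (Fin n) → EuclideanSpace ℝ (Fin n))
    (hφ : ∀ t x i, φ t x i =
      x i * Real.exp (α i * t) *
        (1 + β i / α i * x i ^ m i * (1 - Real.exp (α i * (m i : ℝ) * t))) ^ (-(1:ℝ) / m i)) :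
    (∀ x : EuclideanSpace ℝ (Fin n), φ 0 x = x) ∧
    (∀ t ≥ (0:ℝ), ∀ x : EuclideanSpace ℝ (Fin n), ∀ i : Fin n,
      HasDerivAt (fun s => φ s x i) (α i * φ t x i + β i * φ t x i ^ (1 + m i)) t) ∧
    (∀ t ≥ (0:ℝ), ∀ x : EuclideanSpace ℝ (Fin n), ‖φ t x‖ ≤ ‖x‖ * Real.exp (b * t)) := by
  have hφ' : ∀ t x i, φ t x i = flow (α i) (β i) (m i) (x i) t := hφ
  have hαneg : ∀ i, α i < 0 := fun i => (hα i).2.trans_lt hb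
  have hdenom : ∀ t ≥ (0:ℝ), ∀ x i, 1 ≤ denom (α i) (β i) (m i) x t := fun t ht x i =>
    one_le_denom (hαneg i).le ((hβ i).2.trans hb') (hme i) ht
  refine ⟨fun x => ?_, fun t ht x i => ?_, fun t ht x => ?_⟩
  · ext i
    simp [hφ']
  · simp only [hφ']
    exact hasDerivAt_flow (hαneg i).ne (hmp i).ne' (one_pos.trans_le (hdenom t ht (x i) i))
  · refine EuclideanSpace.norm_le_mul_of_abs_le (exp_pos _).le fun i => ?_
    calc |φ t x i| ≤ |x i| * exp (α i * t) := by rw [hφ']; exact abs_flow_le (hdenom t ht _ i)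
      _ ≤ |x i| * exp (b * t) := by gcongr; exact (hα i).2

/-- The explicit Bernoulli-type formula defines a forward flow of
the binomial vector field `X₃(x)ᵢ = αᵢ xᵢ + βᵢ xᵢ^{1+mᵢ}`, together with the
estimate `‖φ t x‖ ≤ ‖x‖ e^{bt}`. -/
theorem stmt_4 (n : ℕ) (hn : 1 ≤ n) (a b a' b' : ℝ) (hb : b < 0) (hb' : b' ≤ 0)
    (α β : Fin n → ℝ) (hα : ∀ i, a ≤ α i ∧ α i ≤ b) (hβ : ∀ i, a' ≤ β i ∧ β i ≤ b')
    (m : Fin n → ℕ) (hme : ∀ i, Even (m i)) (hmp : ∀ i, 0 < m i)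
    (φ : ℝ → EuclideanSpace ℝ (Fin n) → EuclideanSpace ℝ (Fin n))
    (hφ : ∀ t x i, φ t x i =
      x i * Real.exp (α i * t) *
        (1 + β i / α i * x i ^ m i * (1 - Real.exp (α i * (m i : ℝ) * t))) ^ (-(1:ℝ) / m i)) :
    (∀ x : EuclideanSpace ℝ (Fin n), φ 0 x = x) ∧
    (∀ t ≥ (0:ℝ), ∀ x : EuclideanSpace ℝ (Fin n), ∀ i : Fin n,
      HasDerivAt (fun s => φ s x i) (α i * φ t x i + β i * φ t x i ^ (1 + m i)) t) ∧
    (∀ t ≥ (0:ℝ), ∀ x : EuclideanSpace ℝ (Fin n), ‖φ t x‖ ≤ ‖x‖ * Real.exp (b * t)) :=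
  stmt_4_general n a b a' b' hb hb' α β hα hβ m hme hmp φ hφ
end

section
/- Let a ≤ b be reals, α : Fin n → ℝ with a ≤ αᵢ ≤ b for all i, and let Z₁ : ℝⁿ → ℝⁿ be differentiable with ‖DZ₁(x)‖ ≤ c₁ (operator norm) for all x ∈ ℝⁿ, where c₁ > 0. Set a₁ = a − c₁, b₁ = b + c₁. Let Y₁(x)ᵢ = αᵢ xᵢ + Z₁(x)ᵢ, let ψ be a forward flow of Y₁, and let η be a first variation of ψ at x ∈ ℝⁿ with initial vector ν ∈ ℝⁿ. Then for all t ≥ 0: ‖ν‖e^{a₁ t} ≤ ‖η t‖ ≤ ‖ν‖e^{b₁ t}. -/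
/-!
The linear part `DY₁(y) = diag α + DZ₁(y)` has numerical range in `[a - c₁, b + c₁]`:
`a ‖v‖² ≤ ⟪v, diag α v⟫ ≤ b ‖v‖²` and `|⟪v, DZ₁(y) v⟫| ≤ c₁ ‖v‖²`. Hence `‖η‖²` has derivative
`2 ⟪η, DY₁ η⟫` between `2 a₁ ‖η‖²` and `2 b₁ ‖η‖²`, and Grönwall's inequality applied to `‖η‖²`
and to `-‖η‖²` gives both exponential bounds.
-/

open Real Matrix
open scoped RealInnerProductSpace

theorem le_mul_exp_of_hasDerivAt_of_deriv_le {f f' : ℝ → ℝ} {K : ℝ}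
    (hf : ∀ t ≥ (0 : ℝ), HasDerivAt f (f' t) t) (bound : ∀ t ≥ (0 : ℝ), f' t ≤ K * f t)
    {t : ℝ} (ht : 0 ≤ t) : f t ≤ f 0 * exp (K * t) := by
  have := le_gronwallBound_of_liminf_deriv_right_le (δ := f 0) (ε := 0) (b := t)
    (fun s hs => (hf s hs.1).continuousAt.continuousWithinAt)
    (fun s hs _ hr => (hf s hs.1).hasDerivWithinAt.liminf_right_slope_le hr) le_rfl
    (fun s hs => by simpa using bound s hs.1) t ⟨ht, le_rfl⟩
  rwa [gronwallBound_ε0, sub_zero] at this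

theorem exp_two_mul_mul (b t : ℝ) : exp (2 * b * t) = exp (b * t) ^ 2 := by
  rw [sq, ← exp_add]; ring_nf

section InnerProductSpace

variable {E : Type*} [NormedAddCommGroup E] [InnerProductSpace ℝ E]

theorem norm_le_norm_mul_exp_of_inner_deriv_le {u u' : ℝ → E} {b : ℝ}
    (hu : ∀ t ≥ (0 : ℝ), HasDerivAt u (u' t) t)
    (hb : ∀ t ≥ (0 : ℝ), ⟪u t, u' t⟫ ≤ b * ‖u t‖ ^ 2) {t : ℝ} (ht : 0 ≤ t) :
    ‖u t‖ ≤ ‖u 0‖ * exp (b * t) := by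
  have h := le_mul_exp_of_hasDerivAt_of_deriv_le (fun s hs => (hu s hs).norm_sq)
    (K := 2 * b) (fun s hs => by linarith [hb s hs]) ht
  rw [exp_two_mul_mul, ← mul_pow] at h
  exact (pow_le_pow_iff_left₀ (norm_nonneg _) (by positivity) two_ne_zero).mp h

theorem norm_mul_exp_le_norm_of_le_inner_deriv {u u' : ℝ → E} {a : ℝ}
    (hu : ∀ t ≥ (0 : ℝ), HasDerivAt u (u' t) t)
    (ha : ∀ t ≥ (0 : ℝ), a * ‖u t‖ ^ 2 ≤ ⟪u t, u' t⟫) {t : ℝ} (ht : 0 ≤ t) :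
    ‖u 0‖ * exp (a * t) ≤ ‖u t‖ := by
  have h := le_mul_exp_of_hasDerivAt_of_deriv_le (f := fun s => -‖u s‖ ^ 2)
    (fun s hs => (hu s hs).norm_sq.neg) (K := 2 * a) (fun s hs => by linarith [ha s hs]) ht
  rw [exp_two_mul_mul, neg_mul, neg_le_neg_iff, ← mul_pow] at h
  exact (pow_le_pow_iff_left₀ (by positivity) (norm_nonneg _) two_ne_zero).mp h

theorem abs_inner_apply_self_le (B : E →L[ℝ] E) (v : E) : |⟪v, B v⟫| ≤ ‖B‖ * ‖v‖ ^ 2 :=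
  calc |⟪v, B v⟫| ≤ ‖v‖ * ‖B v‖ := abs_real_inner_le_norm _ _
    _ ≤ ‖v‖ * (‖B‖ * ‖v‖) := by gcongr; exact B.le_opNorm v
    _ = ‖B‖ * ‖v‖ ^ 2 := by ring

theorem sub_mul_norm_sq_le_inner_add_apply {A B : E →L[ℝ] E} {a c : ℝ} {v : E}
    (hA : a * ‖v‖ ^ 2 ≤ ⟪v, A v⟫) (hB : ‖B‖ ≤ c) : (a - c) * ‖v‖ ^ 2 ≤ ⟪v, (A + B) v⟫ := by
  rw [_root_.add_apply, inner_add_right]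
  nlinarith [neg_abs_le ⟪v, B v⟫, abs_inner_apply_self_le B v, sq_nonneg ‖v‖]

theorem inner_add_apply_le_add_mul_norm_sq {A B : E →L[ℝ] E} {b c : ℝ} {v : E}
    (hA : ⟪v, A v⟫ ≤ b * ‖v‖ ^ 2) (hB : ‖B‖ ≤ c) : ⟪v, (A + B) v⟫ ≤ (b + c) * ‖v‖ ^ 2 := by
  rw [_root_.add_apply, inner_add_right]
  nlinarith [le_abs_self ⟪v, B v⟫, abs_inner_apply_self_le B v, sq_nonneg ‖v‖]

end InnerProductSpace

section Diagonal

variable {ι : Type*} [Fintype ι] [DecidableEq ι]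

theorem inner_toEuclideanCLM_diagonal (α : ι → ℝ) (v : EuclideanSpace ℝ ι) :
    ⟪v, toEuclideanCLM (𝕜 := ℝ) (diagonal α) v⟫ = ∑ i, α i * v i ^ 2 := by
  rw [inner_toEuclideanCLM]
  exact Finset.sum_congr rfl fun i _ => by simp only [mulVec_diagonal]; ring

theorem mul_norm_sq_le_inner_toEuclideanCLM_diagonal {α : ι → ℝ} {a : ℝ} (ha : ∀ i, a ≤ α i)
    (v : EuclideanSpace ℝ ι) : a * ‖v‖ ^ 2 ≤ ⟪v, toEuclideanCLM (𝕜 := ℝ) (diagonal α) v⟫ := by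
  rw [inner_toEuclideanCLM_diagonal, EuclideanSpace.real_norm_sq_eq, Finset.mul_sum]
  exact Finset.sum_le_sum fun i _ => by gcongr; exact ha i

theorem inner_toEuclideanCLM_diagonal_le_mul_norm_sq {α : ι → ℝ} {b : ℝ} (hb : ∀ i, α i ≤ b)
    (v : EuclideanSpace ℝ ι) : ⟪v, toEuclideanCLM (𝕜 := ℝ) (diagonal α) v⟫ ≤ b * ‖v‖ ^ 2 := by
  rw [inner_toEuclideanCLM_diagonal, EuclideanSpace.real_norm_sq_eq, Finset.mul_sum]
  exact Finset.sum_le_sum fun i _ => by gcongr; exact hb i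

end Diagonal

theorem stmt_5_general (n : ℕ) (a b : ℝ)
    (α : Fin n → ℝ) (hα : ∀ i, a ≤ α i ∧ α i ≤ b)
    (c₁ : ℝ)
    (Z₁ : EuclideanSpace ℝ (Fin n) → EuclideanSpace ℝ (Fin n))
    (hZdiff : Differentiable ℝ Z₁)
    (hDZ : ∀ x : EuclideanSpace ℝ (Fin n), ‖fderiv ℝ Z₁ x‖ ≤ c₁)
    (a₁ b₁ : ℝ) (ha₁ : a₁ = a - c₁) (hb₁ : b₁ = b + c₁)
    (Y₁ : EuclideanSpace ℝ (Fin n) → EuclideanSpace ℝ (Fin n))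
    (hY₁ : ∀ x i, Y₁ x i = α i * x i + Z₁ x i)
    (ψ : ℝ → EuclideanSpace ℝ (Fin n) → EuclideanSpace ℝ (Fin n))
    (x ν : EuclideanSpace ℝ (Fin n))
    (η : ℝ → EuclideanSpace ℝ (Fin n))
    (hη0 : η 0 = ν)
    (hη : ∀ t ≥ (0:ℝ), HasDerivAt η (fderiv ℝ Y₁ (ψ t x) (η t)) t) :
    ∀ t ≥ (0:ℝ), ‖ν‖ * Real.exp (a₁ * t) ≤ ‖η t‖ ∧ ‖η t‖ ≤ ‖ν‖ * Real.exp (b₁ * t) := by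
  set D := toEuclideanCLM (𝕜 := ℝ) (diagonal α)
  have hY : Y₁ = fun y => D y + Z₁ y := by
    funext y; ext i
    simp [D, hY₁, mulVec_diagonal]
  have hDY (y : EuclideanSpace ℝ (Fin n)) : fderiv ℝ Y₁ y = D + fderiv ℝ Z₁ y := by
    rw [hY]; exact (D.hasFDerivAt.add (hZdiff y).hasFDerivAt).fderiv
  intro t ht
  subst hη0 ha₁ hb₁
  refine ⟨norm_mul_exp_le_norm_of_le_inner_deriv hη (fun s _ => ?_) ht,
    norm_le_norm_mul_exp_of_inner_deriv_le hη (fun s _ => ?_) ht⟩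
  · rw [hDY]
    exact sub_mul_norm_sq_le_inner_add_apply
      (mul_norm_sq_le_inner_toEuclideanCLM_diagonal (fun i => (hα i).1) _) (hDZ _)
  · rw [hDY]
    exact inner_add_apply_le_add_mul_norm_sq
      (inner_toEuclideanCLM_diagonal_le_mul_norm_sq (fun i => (hα i).2) _) (hDZ _)

/-- Exponential estimates for the first variation of the flow of
`Y₁(x)ᵢ = αᵢ xᵢ + Z₁(x)ᵢ` when `‖DZ₁(x)‖ ≤ c₁`. -/
theorem stmt_5 (n : ℕ) (hn : 1 ≤ n) (a b : ℝ) (hab : a ≤ b)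
    (α : Fin n → ℝ) (hα : ∀ i, a ≤ α i ∧ α i ≤ b)
    (c₁ : ℝ) (hc₁ : 0 < c₁)
    (Z₁ : EuclideanSpace ℝ (Fin n) → EuclideanSpace ℝ (Fin n))
    (hZdiff : Differentiable ℝ Z₁)
    (hDZ : ∀ x : EuclideanSpace ℝ (Fin n), ‖fderiv ℝ Z₁ x‖ ≤ c₁)
    (a₁ b₁ : ℝ) (ha₁ : a₁ = a - c₁) (hb₁ : b₁ = b + c₁)
    (Y₁ : EuclideanSpace ℝ (Fin n) → EuclideanSpace ℝ (Fin n))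
    (hY₁ : ∀ x i, Y₁ x i = α i * x i + Z₁ x i)
    (ψ : ℝ → EuclideanSpace ℝ (Fin n) → EuclideanSpace ℝ (Fin n))
    (hψ0 : ∀ x, ψ 0 x = x)
    (hψ : ∀ t ≥ (0:ℝ), ∀ x, HasDerivAt (fun s => ψ s x) (Y₁ (ψ t x)) t)
    (x ν : EuclideanSpace ℝ (Fin n))
    (η : ℝ → EuclideanSpace ℝ (Fin n))
    (hη0 : η 0 = ν)
    (hη : ∀ t ≥ (0:ℝ), HasDerivAt η (fderiv ℝ Y₁ (ψ t x) (η t)) t) :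
    ∀ t ≥ (0:ℝ), ‖ν‖ * Real.exp (a₁ * t) ≤ ‖η t‖ ∧ ‖η t‖ ≤ ‖ν‖ * Real.exp (b₁ * t) :=
  stmt_5_general n a b α hα c₁ Z₁ hZdiff hDZ a₁ b₁ ha₁ hb₁ Y₁ hY₁ ψ x ν η hη0 hη
end

section
/- Let β : Fin n → ℝ with βᵢ ≤ 0 for all i, and let each mᵢ be an even positive integer. Define φ : ℝ → ℝⁿ → ℝⁿ coordinatewise by (φ t x)ᵢ = xᵢ (1 − mᵢ βᵢ t xᵢ^{mᵢ})^{−1/mᵢ}. Then φ is a forward flow of the vector field X₂(x)ᵢ = βᵢ xᵢ^{1+mᵢ}: φ 0 x = x for all x ∈ ℝⁿ, and for all t ≥ 0 and all x, (d/ds)(φ s x)ᵢ at s = t equals βᵢ (φ t x)ᵢ^{1+mᵢ}. -/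
/-! Coordinatewise the field is the scalar equation `ẏ = b y ^ (1 + k)`, and
`y (1 - k b t y ^ k) ^ (-1/k)` is its solution by separation of variables: the chain rule for
the real power produces `y ^ (1 + k) b (1 - k b t y ^ k) ^ (-1/k - 1)`, and
`(-1/k) (1 + k) = -1/k - 1`. For `b ≤ 0`, `t ≥ 0` and `k` even the base is at least `1`, so the
real power is differentiable there. -/

noncomputable def monomialFlow (k : ℕ) (b t y : ℝ) : ℝ :=
  y * (1 - k * b * t * y ^ k) ^ (-(1:ℝ) / k)

theorem monomialFlow_zero (k : ℕ) (b y : ℝ) : monomialFlow k b 0 y = y := by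
  simp [monomialFlow]

theorem hasDerivAt_monomialFlow {k : ℕ} (hk : k ≠ 0) (b : ℝ) {t y : ℝ}
    (hpos : 0 < 1 - k * b * t * y ^ k) :
    HasDerivAt (fun s => monomialFlow k b s y) (b * monomialFlow k b t y ^ (1 + k)) t := by
  have hk' : (k : ℝ) ≠ 0 := Nat.cast_ne_zero.mpr hk
  have hbase : HasDerivAt (fun s => 1 - k * b * s * y ^ k) (-(k * b * y ^ k)) t := by
    simpa using (((hasDerivAt_id t).const_mul (k * b)).mul_const (y ^ k)).const_sub 1
  have hexp : (-(1:ℝ) / k) * (1 + k) = -(1:ℝ) / k - 1 := by field_simp; ring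
  have hflow : monomialFlow k b t y ^ (1 + k) =
      y ^ (1 + k) * (1 - k * b * t * y ^ k) ^ (-(1:ℝ) / k - 1) := by
    rw [monomialFlow, mul_pow, ← Real.rpow_natCast (_ ^ _), ← Real.rpow_mul hpos.le]
    push_cast
    rw [hexp]
  refine ((hbase.rpow_const (p := -(1:ℝ) / k) (Or.inl hpos.ne')).const_mul y).congr_deriv ?_
  rw [hflow]
  field_simp
  ring

theorem one_sub_mul_pow_pos {k : ℕ} (hk : Even k) {b t : ℝ} (hb : b ≤ 0) (ht : 0 ≤ t) (y : ℝ) :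
    0 < 1 - k * b * t * y ^ k := by
  have : k * b * t * y ^ k ≤ 0 :=
    mul_nonpos_of_nonpos_of_nonneg
      (mul_nonpos_of_nonpos_of_nonneg (mul_nonpos_of_nonneg_of_nonpos k.cast_nonneg hb) ht)
      (hk.pow_nonneg y)
  linarith

theorem stmt_8_general (n : ℕ)
    (β : Fin n → ℝ) (hβ : ∀ i, β i ≤ 0)
    (m : Fin n → ℕ) (hme : ∀ i, Even (m i)) (hmp : ∀ i, 0 < m i)
    (φ : ℝ → EuclideanSpace ℝ (Fin n) → EuclideanSpace ℝ (Fin n))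
    (hφ : ∀ t x i, φ t x i =
      x i * (1 - (m i : ℝ) * β i * t * x i ^ m i) ^ (-(1:ℝ) / m i)) :
    (∀ x : EuclideanSpace ℝ (Fin n), φ 0 x = x) ∧
    (∀ t ≥ (0:ℝ), ∀ x : EuclideanSpace ℝ (Fin n), ∀ i : Fin n,
      HasDerivAt (fun s => φ s x i) (β i * φ t x i ^ (1 + m i)) t) := by
  have hφ' : ∀ t x i, φ t x i = monomialFlow (m i) (β i) t (x i) := hφ
  refine ⟨fun x => ?_, fun t ht x i => ?_⟩
  · ext i
    rw [hφ', monomialFlow_zero]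
  · simp only [hφ']
    exact hasDerivAt_monomialFlow (hmp i).ne' (β i) (one_sub_mul_pow_pos (hme i) (hβ i) ht (x i))

/-- The explicit formula `(φ t x)ᵢ = xᵢ (1 − mᵢ βᵢ t xᵢ^{mᵢ})^{−1/mᵢ}`
defines a forward flow of the monomial vector field `X₂(x)ᵢ = βᵢ xᵢ^{1+mᵢ}`. -/
theorem stmt_8 (n : ℕ) (hn : 1 ≤ n)
    (β : Fin n → ℝ) (hβ : ∀ i, β i ≤ 0)
    (m : Fin n → ℕ) (hme : ∀ i, Even (m i)) (hmp : ∀ i, 0 < m i)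
    (φ : ℝ → EuclideanSpace ℝ (Fin n) → EuclideanSpace ℝ (Fin n))
    (hφ : ∀ t x i, φ t x i =
      x i * (1 - (m i : ℝ) * β i * t * x i ^ m i) ^ (-(1:ℝ) / m i)) :
    (∀ x : EuclideanSpace ℝ (Fin n), φ 0 x = x) ∧
    (∀ t ≥ (0:ℝ), ∀ x : EuclideanSpace ℝ (Fin n), ∀ i : Fin n,
      HasDerivAt (fun s => φ s x i) (β i * φ t x i ^ (1 + m i)) t) :=
  stmt_8_general n β hβ m hme hmp φ hφ
end

section
/- Let 0 < b ≤ a and α : Fin n → ℝ with −a ≤ αᵢ ≤ −b for all i; let 0 < b′ ≤ a′ and β : Fin n → ℝ with −a′ ≤ βᵢ ≤ −b′; let the mᵢ be even positive integers with 0 < m₀ ≤ mᵢ ≤ m₀′. Let Z₃ : ℝⁿ → ℝⁿ be continuous with components Z₃ᵢ satisfying, for constants c₀′, c₀″ > 0: |Z₃ᵢ(x)| ≤ c₀′|xᵢ|^{2+mᵢ} for ‖x‖ ≤ 1 and |Z₃ᵢ(x)| ≤ c₀″|xᵢ|^{1+mᵢ} for ‖x‖ ≥ 1; set c₀ = max(c₀′,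 c₀″) and assume b₀ = b′ − c₀ > 0. Let ψ be a forward flow of Y₃(x)ᵢ = αᵢ xᵢ + βᵢ xᵢ^{1+mᵢ} + Z₃ᵢ(x). Then for every ρ > 0 there exist constants c₁, c₂ > 0 such that for all x with ‖x‖ < ρ and all t ≥ 0: c₁‖x‖e^{−a t} ≤ ‖ψ t x‖ ≤ c₂‖x‖e^{−b t}. -/
/-!
Both bounds come from the squared norm `R = ‖ψ t x‖²`, whose derivative is `2⟪ψ, Y₃ ψ⟫`,
through the observation that `R · exp θ` is monotone once `R' ≥ -θ' R`.
Coordinatewise, `yᵢ Y₃ᵢ(y) ≤ -b yᵢ²` because the even power makes `βᵢ yᵢ^{2+mᵢ}` dominate the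
perturbation (`b' ≥ c₀`); this gives `R' ≤ -2b R`, hence the upper bound. In turn the upper bound
makes `|ψᵢ|^{mᵢ}` decay like `exp (-b m₀ t)`, so `R' ≥ -2(a + K exp (-b m₀ t)) R`; the perturbation
of the rate `a` is integrable in time, which costs only the constant factor `exp (-K / (b m₀))`.
-/

open Real Set
open scoped InnerProductSpace

lemma monotoneOn_mul_exp_of_hasDerivAt {R R' θ θ' : ℝ → ℝ}
    (hR : ∀ s ≥ 0, HasDerivAt R (R' s) s) (hθ : ∀ s ≥ 0, HasDerivAt θ (θ' s) s)
    (h : ∀ s ≥ 0, -θ' s * R s ≤ R' s) :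
    MonotoneOn (fun s => R s * exp (θ s)) (Ici 0) := by
  have hd : ∀ s ≥ 0, HasDerivAt (fun s => R s * exp (θ s))
      ((R' s + θ' s * R s) * exp (θ s)) s := fun s hs =>
    ((hR s hs).mul (hθ s hs).exp).congr_deriv (by ring)
  refine monotoneOn_of_hasDerivWithinAt_nonneg (convex_Ici 0)
    (fun s hs => (hd s hs).continuousAt.continuousWithinAt)
    (fun s hs => (hd s (interior_subset hs)).hasDerivWithinAt) fun s hs => ?_
  have hs' := h s (interior_subset hs)
  exact mul_nonneg (by linarith) (exp_pos _).le

section InnerProductSpace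

variable {E : Type*} [NormedAddCommGroup E] [InnerProductSpace ℝ E] {γ γ' : ℝ → E}

lemma norm_le_mul_exp_of_inner_le (hγ : ∀ t ≥ 0, HasDerivAt γ (γ' t) t) {b : ℝ}
    (h : ∀ t ≥ 0, ⟪γ t, γ' t⟫_ℝ ≤ -b * ‖γ t‖ ^ 2) {t : ℝ} (ht : 0 ≤ t) :
    ‖γ t‖ ≤ ‖γ 0‖ * exp (-b * t) := by
  have hmono := monotoneOn_mul_exp_of_hasDerivAt (R := fun s => -‖γ s‖ ^ 2)
    (θ' := fun _ => 2 * b)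
    (fun s hs => (hγ s hs).norm_sq.neg)
    (fun s _ => by simpa using (hasDerivAt_id s).const_mul (2 * b))
    (fun s hs => by nlinarith [h s hs])
  have hsq : ‖γ t‖ ^ 2 ≤ (‖γ 0‖ * exp (-b * t)) ^ 2 := by
    have key := hmono self_mem_Ici ht ht
    simp only [mul_zero, exp_zero, mul_one, neg_mul, neg_le_neg_iff] at key
    calc ‖γ t‖ ^ 2 = ‖γ t‖ ^ 2 * exp (2 * b * t) * exp (-b * t) ^ 2 := by
          rw [mul_assoc, ← exp_nat_mul, ← exp_add]; ring_nf; simp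
      _ ≤ (‖γ 0‖ * exp (-b * t)) ^ 2 := by
          rw [mul_pow]; gcongr
  exact (pow_le_pow_iff_left₀ (norm_nonneg _) (by positivity) two_ne_zero).mp hsq

lemma exp_mul_norm_le_of_le_inner (hγ : ∀ t ≥ 0, HasDerivAt γ (γ' t) t) {a K k : ℝ}
    (hK : 0 ≤ K) (hk : 0 < k)
    (h : ∀ t ≥ 0, -(a + K * exp (-k * t)) * ‖γ t‖ ^ 2 ≤ ⟪γ t, γ' t⟫_ℝ) {t : ℝ} (ht : 0 ≤ t) :
    exp (-(K / k)) * ‖γ 0‖ * exp (-a * t) ≤ ‖γ t‖ := by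
  have hθ : ∀ s, HasDerivAt (fun s => 2 * a * s - 2 * (K / k) * exp (-k * s))
      (2 * (a + K * exp (-k * s))) s := fun s => by
    have := ((hasDerivAt_id' s).const_mul (2 * a)).sub
      (((hasDerivAt_id' s).const_mul (-k)).exp.const_mul (2 * (K / k)))
    refine this.congr_deriv ?_
    field_simp
    ring
  have hmono := monotoneOn_mul_exp_of_hasDerivAt (fun s hs => (hγ s hs).norm_sq)
    (fun s _ => hθ s) (fun s hs => by nlinarith [h s hs])
  have hsq : (exp (-(K / k)) * ‖γ 0‖ * exp (-a * t)) ^ 2 ≤ ‖γ t‖ ^ 2 := by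
    have key := hmono self_mem_Ici ht ht
    simp only [mul_zero, exp_zero, mul_one, zero_sub] at key
    have hθt : 2 * a * t - 2 * (K / k) * exp (-k * t) ≤ 2 * a * t := by
      have : 0 ≤ K / k * exp (-k * t) := by positivity
      linarith
    calc (exp (-(K / k)) * ‖γ 0‖ * exp (-a * t)) ^ 2
        = ‖γ 0‖ ^ 2 * exp (-(2 * (K / k))) * exp (-(2 * a * t)) := by
          simp only [mul_pow, ← exp_nat_mul]; ring_nf
      _ ≤ ‖γ t‖ ^ 2 * exp (2 * a * t) * exp (-(2 * a * t)) := by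
          refine mul_le_mul_of_nonneg_right (key.trans ?_) (exp_pos _).le
          exact mul_le_mul_of_nonneg_left (exp_le_exp.2 hθt) (by positivity)
      _ = ‖γ t‖ ^ 2 := by rw [mul_assoc, ← exp_add]; simp
  exact (pow_le_pow_iff_left₀ (by positivity) (norm_nonneg _) two_ne_zero).mp hsq

end InnerProductSpace

section Coordinates

variable {ι : Type*} [Fintype ι]

lemma inner_le_mul_norm_sq_of_forall_apply {y v : EuclideanSpace ℝ ι} {c : ℝ}
    (h : ∀ i, y i * v i ≤ c * y i ^ 2) : ⟪y, v⟫_ℝ ≤ c * ‖y‖ ^ 2 := by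
  rw [EuclideanSpace.norm_sq_eq, PiLp.inner_apply, Finset.mul_sum]
  refine Finset.sum_le_sum fun i _ => ?_
  simpa [mul_comm] using h i

lemma mul_norm_sq_le_inner_of_forall_apply {y v : EuclideanSpace ℝ ι} {c : ℝ}
    (h : ∀ i, c * y i ^ 2 ≤ y i * v i) : c * ‖y‖ ^ 2 ≤ ⟪y, v⟫_ℝ := by
  rw [EuclideanSpace.norm_sq_eq, PiLp.inner_apply, Finset.mul_sum]
  refine Finset.sum_le_sum fun i _ => ?_
  simpa [mul_comm] using h i

lemma abs_apply_mul_apply_le {Z : EuclideanSpace ℝ ι → EuclideanSpace ℝ ι} {m : ι → ℕ}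
    {c' c'' : ℝ}
    (hin : ∀ y : EuclideanSpace ℝ ι, ‖y‖ ≤ 1 → ∀ i, |Z y i| ≤ c' * |y i| ^ (2 + m i))
    (hout : ∀ y : EuclideanSpace ℝ ι, 1 ≤ ‖y‖ → ∀ i, |Z y i| ≤ c'' * |y i| ^ (1 + m i))
    (y : EuclideanSpace ℝ ι) (i : ι) :
    |y i * Z y i| ≤ max c' c'' * |y i| ^ (2 + m i) := by
  have hy : |y i| ≤ ‖y‖ := by simpa using PiLp.norm_apply_le y i
  rw [abs_mul]
  rcases le_total ‖y‖ 1 with h1 | h1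
  · calc |y i| * |Z y i| ≤ 1 * (c' * |y i| ^ (2 + m i)) :=
          mul_le_mul (hy.trans h1) (hin y h1 i) (abs_nonneg _) zero_le_one
      _ ≤ max c' c'' * |y i| ^ (2 + m i) := by
          rw [one_mul]; gcongr; exact le_max_left _ _
  · calc |y i| * |Z y i| ≤ |y i| * (c'' * |y i| ^ (1 + m i)) :=
          mul_le_mul_of_nonneg_left (hout y h1 i) (abs_nonneg _)
      _ = c'' * |y i| ^ (2 + m i) := by ring
      _ ≤ max c' c'' * |y i| ^ (2 + m i) := by gcongr; exact le_max_right _ _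

end Coordinates

lemma mul_binomial_le {b b' c α β y z : ℝ} {m : ℕ} (hm : Even m) (hα : α ≤ -b)
    (hβ : β ≤ -b') (hc : c ≤ b') (hz : y * z ≤ c * |y| ^ (2 + m)) :
    y * (α * y + β * y ^ (1 + m) + z) ≤ -b * y ^ 2 := by
  have hexpand : y * (α * y + β * y ^ (1 + m) + z)
      = α * y ^ 2 + β * |y| ^ (2 + m) + y * z := by
    rw [add_comm 2 m, (hm.add even_two).pow_abs]; ring
  have hlin := mul_le_mul_of_nonneg_right hα (sq_nonneg y)
  have hnonlin := mul_le_mul_of_nonneg_right (show β + c ≤ 0 by linarith)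
    (by positivity : 0 ≤ |y| ^ (2 + m))
  linarith

lemma neg_mul_sq_le_mul_binomial {a a' c α β y z w : ℝ} {m : ℕ} (hm : Even m)
    (hα : -a ≤ α) (hβ : -a' ≤ β) (hK : 0 ≤ a' + c) (hz : -(c * |y| ^ (2 + m)) ≤ y * z)
    (hw : |y| ^ m ≤ w) :
    -(a + (a' + c) * w) * y ^ 2 ≤ y * (α * y + β * y ^ (1 + m) + z) := by
  have hexpand : y * (α * y + β * y ^ (1 + m) + z)
      = α * y ^ 2 + β * (y ^ 2 * |y| ^ m) + y * z := by
    rw [hm.pow_abs]; ring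
  rw [pow_add, sq_abs] at hz
  have hy2 : 0 ≤ y ^ 2 := sq_nonneg y
  have hlin := mul_le_mul_of_nonneg_right hα hy2
  have hnonlin := mul_le_mul_of_nonneg_right hβ (by positivity : 0 ≤ y ^ 2 * |y| ^ m)
  have hweight := mul_le_mul_of_nonneg_left (mul_le_mul_of_nonneg_left hw hy2) hK
  linarith

lemma pow_le_mul_exp_of_le_mul_exp {r ρ b s : ℝ} {m m₀ m₀' : ℕ} (hr : 0 ≤ r) (hb : 0 ≤ b)
    (hs : 0 ≤ s) (h : r ≤ ρ * exp (-b * s)) (hm : m₀ ≤ m ∧ m ≤ m₀') :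
    r ^ m ≤ max 1 ρ ^ m₀' * exp (-(b * m₀) * s) := by
  have he : exp (-b * s) ≤ 1 := exp_le_one_iff.2 (by nlinarith)
  calc r ^ m ≤ (max 1 ρ * exp (-b * s)) ^ m :=
        pow_le_pow_left₀ hr (h.trans (by gcongr; exact le_max_right _ _)) _
    _ = max 1 ρ ^ m * exp (-b * s) ^ m := mul_pow _ _ _
    _ ≤ max 1 ρ ^ m₀' * exp (-b * s) ^ m₀ :=
        mul_le_mul (pow_le_pow_right₀ (le_max_left _ _) hm.2)
          (pow_le_pow_of_le_one (exp_pos _).le he hm.1) (by positivity) (by positivity)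
    _ = max 1 ρ ^ m₀' * exp (-(b * m₀) * s) := by rw [← exp_nat_mul]; ring_nf

theorem stmt_13_general (n : ℕ) (a b : ℝ) (hb : 0 < b)
    (α : Fin n → ℝ) (hα : ∀ i, -a ≤ α i ∧ α i ≤ -b)
    (a' b' : ℝ) (hab' : b' ≤ a')
    (β : Fin n → ℝ) (hβ : ∀ i, -a' ≤ β i ∧ β i ≤ -b')
    (m : Fin n → ℕ) (hme : ∀ i, Even (m i))
    (m₀ m₀' : ℕ) (hm₀ : 0 < m₀) (hm : ∀ i, m₀ ≤ m i ∧ m i ≤ m₀')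
    (c₀' c₀'' : ℝ) (hc₀' : 0 < c₀')
    (Z₃ : EuclideanSpace ℝ (Fin n) → EuclideanSpace ℝ (Fin n))
    (hZin : ∀ x : EuclideanSpace ℝ (Fin n), ‖x‖ ≤ 1 →
      ∀ i, |Z₃ x i| ≤ c₀' * |x i| ^ (2 + m i))
    (hZout : ∀ x : EuclideanSpace ℝ (Fin n), 1 ≤ ‖x‖ →
      ∀ i, |Z₃ x i| ≤ c₀'' * |x i| ^ (1 + m i))
    (c₀ b₀ : ℝ) (hc₀ : c₀ = max c₀' c₀'') (hb₀ : b₀ = b' - c₀) (hb₀pos : 0 < b₀)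
    (Y₃ : EuclideanSpace ℝ (Fin n) → EuclideanSpace ℝ (Fin n))
    (hY₃ : ∀ x i, Y₃ x i = α i * x i + β i * x i ^ (1 + m i) + Z₃ x i)
    (ψ : ℝ → EuclideanSpace ℝ (Fin n) → EuclideanSpace ℝ (Fin n))
    (hψ0 : ∀ x, ψ 0 x = x)
    (hψ : ∀ t ≥ (0:ℝ), ∀ x, HasDerivAt (fun s => ψ s x) (Y₃ (ψ t x)) t) :
    ∀ ρ > (0:ℝ), ∃ c₁ > (0:ℝ), ∃ c₂ > (0:ℝ),
      ∀ x : EuclideanSpace ℝ (Fin n), ‖x‖ < ρ → ∀ t ≥ (0:ℝ),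
        c₁ * ‖x‖ * Real.exp (-a * t) ≤ ‖ψ t x‖ ∧
        ‖ψ t x‖ ≤ c₂ * ‖x‖ * Real.exp (-b * t) := by
  intro ρ _
  subst hc₀ hb₀
  have hZ := abs_apply_mul_apply_le hZin hZout
  have hK : 0 ≤ a' + max c₀' c₀'' := by linarith [le_max_left c₀' c₀'']
  have hk : 0 < b * m₀ := by positivity
  refine ⟨exp (-((a' + max c₀' c₀'') * max 1 ρ ^ m₀' / (b * m₀))), exp_pos _, 1, one_pos,
    fun x hx t ht => ?_⟩
  have hupper : ∀ s ≥ 0, ‖ψ s x‖ ≤ ‖x‖ * exp (-b * s) := fun s hs => by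
    simpa only [hψ0] using norm_le_mul_exp_of_inner_le (fun s hs => hψ s hs x)
      (fun s _ => inner_le_mul_norm_sq_of_forall_apply fun i => by
        rw [hY₃]
        exact mul_binomial_le (hme i) (hα i).2 (hβ i).2 (by linarith)
          ((le_abs_self _).trans (hZ _ i))) hs
  have hlower := exp_mul_norm_le_of_le_inner (K := (a' + max c₀' c₀'') * max 1 ρ ^ m₀')
    (fun s hs => hψ s hs x) (mul_nonneg hK (by positivity)) hk
    (fun s hs => mul_norm_sq_le_inner_of_forall_apply fun i => by
      rw [hY₃, mul_assoc]
      refine neg_mul_sq_le_mul_binomial (hme i) (hα i).1 (hβ i).1 hK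
        (neg_le_of_abs_le (hZ _ i)) ?_
      exact pow_le_mul_exp_of_le_mul_exp (ρ := ρ) (abs_nonneg _) hb.le hs
        ((PiLp.norm_apply_le _ i).trans ((hupper s hs).trans (by gcongr))) (hm i)) ht
  exact ⟨by simpa only [hψ0] using hlower, by simpa only [one_mul] using hupper t ht⟩

/-- Exponential two-sided estimates for the forward flow of the
perturbed binomial vector field `Y₃(x)ᵢ = αᵢ xᵢ + βᵢ xᵢ^{1+mᵢ} + Z₃ᵢ(x)`. -/
theorem stmt_13 (n : ℕ) (hn : 1 ≤ n) (a b : ℝ) (hb : 0 < b) (hab : b ≤ a)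
    (α : Fin n → ℝ) (hα : ∀ i, -a ≤ α i ∧ α i ≤ -b)
    (a' b' : ℝ) (hb' : 0 < b') (hab' : b' ≤ a')
    (β : Fin n → ℝ) (hβ : ∀ i, -a' ≤ β i ∧ β i ≤ -b')
    (m : Fin n → ℕ) (hme : ∀ i, Even (m i)) (hmp : ∀ i, 0 < m i)
    (m₀ m₀' : ℕ) (hm₀ : 0 < m₀) (hm : ∀ i, m₀ ≤ m i ∧ m i ≤ m₀')
    (c₀' c₀'' : ℝ) (hc₀' : 0 < c₀') (hc₀'' : 0 < c₀'')
    (Z₃ : EuclideanSpace ℝ (Fin n) → EuclideanSpace ℝ (Fin n))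
    (hZcont : Continuous Z₃)
    (hZin : ∀ x : EuclideanSpace ℝ (Fin n), ‖x‖ ≤ 1 →
      ∀ i, |Z₃ x i| ≤ c₀' * |x i| ^ (2 + m i))
    (hZout : ∀ x : EuclideanSpace ℝ (Fin n), 1 ≤ ‖x‖ →
      ∀ i, |Z₃ x i| ≤ c₀'' * |x i| ^ (1 + m i))
    (c₀ b₀ : ℝ) (hc₀ : c₀ = max c₀' c₀'') (hb₀ : b₀ = b' - c₀) (hb₀pos : 0 < b₀)
    (Y₃ : EuclideanSpace ℝ (Fin n) → EuclideanSpace ℝ (Fin n))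
    (hY₃ : ∀ x i, Y₃ x i = α i * x i + β i * x i ^ (1 + m i) + Z₃ x i)
    (ψ : ℝ → EuclideanSpace ℝ (Fin n) → EuclideanSpace ℝ (Fin n))
    (hψ0 : ∀ x, ψ 0 x = x)
    (hψ : ∀ t ≥ (0:ℝ), ∀ x, HasDerivAt (fun s => ψ s x) (Y₃ (ψ t x)) t) :
    ∀ ρ > (0:ℝ), ∃ c₁ > (0:ℝ), ∃ c₂ > (0:ℝ),
      ∀ x : EuclideanSpace ℝ (Fin n), ‖x‖ < ρ → ∀ t ≥ (0:ℝ),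
        c₁ * ‖x‖ * Real.exp (-a * t) ≤ ‖ψ t x‖ ∧
        ‖ψ t x‖ ≤ c₂ * ‖x‖ * Real.exp (-b * t) :=
  stmt_13_general n a b hb α hα a' b' hab' β hβ m hme m₀ m₀' hm₀ hm c₀' c₀'' hc₀' Z₃ hZin hZout c₀
    b₀ hc₀ hb₀ hb₀pos Y₃ hY₃ ψ hψ0 hψ
end

section
/- Let 0 < b ≤ a and α : Fin n → ℝ with −a ≤ αᵢ ≤ −b for all i; let 0 < b′ ≤ a′ and β : Fin n → ℝ with −a′ ≤ βᵢ ≤ −b′; let the mᵢ be even positive integers with 0 < m₀ ≤ mᵢ ≤ m₀′. Let Z₃ : ℝⁿ → ℝⁿ be differentiable with components Z₃ᵢ satisfying, for l = 0, 1 and constants c_l′, c_l″ > 0: ‖D^l Z₃ᵢ(x)‖ ≤ c_l′|xᵢ|^{2−l+mᵢ} for ‖x‖ ≤ 1 and ‖D^l Z₃ᵢ(x)‖ ≤ c_l″|xᵢ|^{1−l+mᵢ} for ‖x‖ ≥ 1; set c_l = max(c_l′, c_l″) and assume b₀ = b′ − c₀ > 0 and b₁ = b′(1+m₀) − c₁ >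 0. Let ψ be a forward flow of Y₃(x)ᵢ = αᵢ xᵢ + βᵢ xᵢ^{1+mᵢ} + Z₃ᵢ(x), and let η be a first variation of ψ at x ∈ ℝⁿ with initial vector ν ∈ ℝⁿ. Then for every ρ > 0 there exists M₁ > 0 such that for all x with ‖x‖ < ρ, all ν ∈ ℝⁿ and all t ≥ 0: ‖η t‖ ≤ M₁‖ν‖e^{−b t}. -/
/-!
Energy estimates. Since `α ≤ -b`, `β ≤ -b' ≤ -c₀` and the `mᵢ` are even, the nonlinear terms
of `Y₃` only help: `⟪y, Y₃ y⟫ ≤ -b ‖y‖²`, so `‖ψ t x‖ ≤ ‖x‖ e^{-bt}`. For the same reason the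
diagonal part of `DY₃` is at most `-b`, while along the orbit `‖DZ₃ᵢ(ψ t x)‖ ≤ c₁ |ψᵢ|^{mᵢ}`
decays like `e^{-bt}` with a constant depending only on `ρ`. Hence
`⟪η, DY₃ η⟫ ≤ (-b + D e^{-bt}) ‖η‖²`, and as `∫₀^∞ D e^{-bs} ds = D / b`, Gronwall's argument
gives `‖η t‖ ≤ e^{D/b} ‖ν‖ e^{-bt}`.
-/

open Real Set
open scoped RealInnerProductSpace

lemma le_apply_zero_of_hasDerivAt_nonpos {f f' : ℝ → ℝ}
    (hf : ∀ t ≥ 0, HasDerivAt f (f' t) t) (hf' : ∀ t ≥ 0, f' t ≤ 0) {t : ℝ} (ht : 0 ≤ t) :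
    f t ≤ f 0 := by
  exact antitoneOn_of_hasDerivWithinAt_nonpos (convex_Ici 0)
    (fun s hs => (hf s hs).continuousAt.continuousWithinAt)
    (fun s hs => (hf s (le_of_lt (by simpa using hs))).hasDerivWithinAt)
    (fun s hs => hf' s (le_of_lt (by simpa using hs))) self_mem_Ici ht ht

/-- `‖u t‖² exp (2 b t + (2 D / b) exp (-b t))` is nonincreasing: the second term of the
exponent absorbs the decaying perturbation `D exp (-b t)` of the rate. -/
lemma norm_le_exp_mul_exp_neg_of_inner_deriv_le {E : Type*} [NormedAddCommGroup E]
    [InnerProductSpace ℝ E] {u u' : ℝ → E} {b D : ℝ} (hb : 0 < b) (hD : 0 ≤ D)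
    (hu : ∀ t ≥ 0, HasDerivAt u (u' t) t)
    (h : ∀ t ≥ 0, ⟪u t, u' t⟫ ≤ (-b + D * exp (-b * t)) * ‖u t‖ ^ 2) {t : ℝ} (ht : 0 ≤ t) :
    ‖u t‖ ≤ exp (D / b) * ‖u 0‖ * exp (-b * t) := by
  set w : ℝ → ℝ := fun s => 2 * b * s + 2 * D / b * exp (-b * s)
  have hw : ∀ s, HasDerivAt w (2 * b - 2 * D * exp (-b * s)) s := fun s => by
    refine (((hasDerivAt_id' s).const_mul (2 * b)).add
      ((((hasDerivAt_id' s).const_mul (-b)).exp).const_mul (2 * D / b))).congr_deriv ?_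
    field_simp
    ring
  have hmono : ‖u t‖ ^ 2 * exp (w t) ≤ ‖u 0‖ ^ 2 * exp (w 0) := by
    refine le_apply_zero_of_hasDerivAt_nonpos (fun s hs => ((hu s hs).norm_sq).mul (hw s).exp)
      (fun s hs => ?_) ht
    nlinarith [mul_le_mul_of_nonneg_left (h s hs) (exp_pos (w s)).le]
  have hwt : 2 * b * t ≤ w t := le_add_of_nonneg_right (by positivity)
  have : ‖u t‖ ^ 2 ≤ (exp (D / b) * ‖u 0‖ * exp (-b * t)) ^ 2 := by
    refine le_of_mul_le_mul_right ?_ (exp_pos (2 * b * t))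
    calc ‖u t‖ ^ 2 * exp (2 * b * t) ≤ ‖u t‖ ^ 2 * exp (w t) := by gcongr
      _ ≤ ‖u 0‖ ^ 2 * exp (w 0) := hmono
      _ = (exp (D / b) * ‖u 0‖ * exp (-b * t)) ^ 2 * exp (2 * b * t) := by
        simp only [w, mul_zero, exp_zero, mul_one, zero_add, mul_pow, ← exp_nat_mul, mul_assoc,
          ← exp_add]
        ring_nf
        rw [exp_zero, mul_one]
  exact (pow_le_pow_iff_left₀ (norm_nonneg _) (by positivity) two_ne_zero).mp this

lemma le_max_mul_pow_of_le_one_of_one_le {v r R c' c'' : ℝ} {k l : ℕ} (hc' : 0 ≤ c')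
    (hr : 0 ≤ r) (hrR : r ≤ R) (hkl : k ≤ l) (hin : R ≤ 1 → v ≤ c' * r ^ l)
    (hout : 1 ≤ R → v ≤ c'' * r ^ k) : v ≤ max c' c'' * r ^ k := by
  rcases le_total R 1 with hR | hR
  · calc v ≤ c' * r ^ l := hin hR
      _ ≤ c' * r ^ k := mul_le_mul_of_nonneg_left (pow_le_pow_of_le_one hr (hrR.trans hR) hkl) hc'
      _ ≤ max c' c'' * r ^ k := by gcongr; exact le_max_left _ _
  · exact (hout hR).trans (by gcongr; exact le_max_right _ _)

lemma pow_le_mul_max_one_pow {r ρ : ℝ} {k N : ℕ} (hr : 0 ≤ r) (hrρ : r ≤ ρ) (hk : 1 ≤ k)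
    (hkN : k ≤ N) : r ^ k ≤ r * max 1 ρ ^ N := by
  obtain ⟨j, rfl⟩ := Nat.exists_eq_add_of_le' hk
  calc r ^ (j + 1) = r * r ^ j := pow_succ' r j
    _ ≤ r * max 1 ρ ^ j := by gcongr; exact hrρ.trans (le_max_right _ _)
    _ ≤ r * max 1 ρ ^ N := by gcongr; exacts [le_max_left _ _, by omega]

namespace EuclideanSpace

variable {n : ℕ}

lemma abs_apply_le_norm (y : EuclideanSpace ℝ (Fin n)) (i : Fin n) : |y i| ≤ ‖y‖ :=
  PiLp.norm_apply_le y i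

lemma inner_le_of_forall_mul_apply_le {κ c : ℝ} {y w : EuclideanSpace ℝ (Fin n)}
    (h : ∀ i, y i * w i ≤ κ * y i ^ 2 + c) : ⟪y, w⟫ ≤ κ * ‖y‖ ^ 2 + n * c := by
  calc ⟪y, w⟫ = ∑ i, y i * w i := by simp [PiLp.inner_apply, mul_comm]
    _ ≤ ∑ i, (κ * y i ^ 2 + c) := Finset.sum_le_sum fun i _ => h i
    _ = κ * ‖y‖ ^ 2 + n * c := by
      simp [Finset.sum_add_distrib, ← Finset.mul_sum, EuclideanSpace.real_norm_sq_eq]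

end EuclideanSpace

section BinomialVectorField

variable {n : ℕ} {α β : Fin n → ℝ} {m : Fin n → ℕ}
  {Z Y : EuclideanSpace ℝ (Fin n) → EuclideanSpace ℝ (Fin n)} {b : ℝ}

lemma inner_le_neg_mul_norm_sq_of_binomial
    (hY : ∀ x i, Y x i = α i * x i + β i * x i ^ (1 + m i) + Z x i) {b' c₀ : ℝ}
    (hα : ∀ i, α i ≤ -b) (hβ : ∀ i, β i ≤ -b') (hm : ∀ i, Even (m i)) (hc₀ : c₀ ≤ b')
    {y : EuclideanSpace ℝ (Fin n)} (hZ : ∀ i, |Z y i| ≤ c₀ * |y i| ^ (1 + m i)) :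
    ⟪y, Y y⟫ ≤ -b * ‖y‖ ^ 2 := by
  simpa using EuclideanSpace.inner_le_of_forall_mul_apply_le (κ := -b) (c := 0) fun i => by
    have hpow : y i * y i ^ (1 + m i) = |y i| ^ (2 + m i) := by
      rw [(Even.add even_two (hm i)).pow_abs]; ring
    have hyZ : y i * Z y i ≤ c₀ * |y i| ^ (2 + m i) :=
      calc y i * Z y i ≤ |y i| * |Z y i| := by rw [← abs_mul]; exact le_abs_self _
        _ ≤ |y i| * (c₀ * |y i| ^ (1 + m i)) := by gcongr; exact hZ i
        _ = c₀ * |y i| ^ (2 + m i) := by ring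
    have : 0 ≤ |y i| ^ (2 + m i) := by positivity
    rw [hY]
    have hαy := mul_le_mul_of_nonneg_right (hα i) (sq_nonneg (y i))
    have hβy := mul_le_mul_of_nonneg_right (hβ i) this
    have hc := mul_le_mul_of_nonneg_right hc₀ this
    linear_combination hαy + hβy + hyZ + hc + β i * hpow

lemma fderiv_apply_apply_of_binomial
    (hY : ∀ x i, Y x i = α i * x i + β i * x i ^ (1 + m i) + Z x i)
    {y : EuclideanSpace ℝ (Fin n)} (hZ : DifferentiableAt ℝ Z y) (v : EuclideanSpace ℝ (Fin n))
    (i : Fin n) :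
    fderiv ℝ Y y v i = (α i + β i * ((1 + m i) * y i ^ m i)) * v i
      + fderiv ℝ (fun z => Z z i) y v := by
  have hproj (j : Fin n) : HasFDerivAt (fun z : EuclideanSpace ℝ (Fin n) => z j)
      (EuclideanSpace.proj (𝕜 := ℝ) j) y :=
    (EuclideanSpace.proj (𝕜 := ℝ) j).hasFDerivAt
  have hYj (j : Fin n) : HasFDerivAt (fun z => Y z j)
      (α j • EuclideanSpace.proj j + β j • ((((1 + m j : ℕ) : ℝ) * y j ^ (1 + m j - 1))
        • EuclideanSpace.proj j) + fderiv ℝ (fun z => Z z j) y) y := by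
    simp only [hY]
    exact ((hproj j |>.const_mul (α j)).add
      (((hasDerivAt_pow (1 + m j) (y j)).comp_hasFDerivAt y (hproj j)).const_mul (β j))).add
      ((EuclideanSpace.proj (𝕜 := ℝ) j).differentiableAt.comp y hZ).hasFDerivAt
  have hYd : DifferentiableAt ℝ Y y :=
    (differentiableAt_piLp 2).2 fun j => (hYj j).differentiableAt
  have hYi : HasFDerivAt (fun z => Y z i) ((EuclideanSpace.proj i).comp (fderiv ℝ Y y)) y :=
    (EuclideanSpace.proj (𝕜 := ℝ) i).hasFDerivAt.comp y hYd.hasFDerivAt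
  have := congrArg (· v) (hYi.unique (hYj i))
  simp only [ContinuousLinearMap.comp_apply, add_apply, smul_apply, PiLp.proj_apply, smul_eq_mul,
    Nat.add_sub_cancel_left, Nat.cast_add, Nat.cast_one] at this
  rw [this]
  ring

lemma inner_fderiv_le_of_binomial
    (hY : ∀ x i, Y x i = α i * x i + β i * x i ^ (1 + m i) + Z x i)
    (hα : ∀ i, α i ≤ -b) (hβ : ∀ i, β i ≤ 0) (hm : ∀ i, Even (m i))
    {y : EuclideanSpace ℝ (Fin n)} (hZ : DifferentiableAt ℝ Z y) {δ : ℝ}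
    (hDZ : ∀ i, ‖fderiv ℝ (fun z => Z z i) y‖ ≤ δ) (e : EuclideanSpace ℝ (Fin n)) :
    ⟪e, fderiv ℝ Y y e⟫ ≤ (-b + n * δ) * ‖e‖ ^ 2 := by
  have key := EuclideanSpace.inner_le_of_forall_mul_apply_le (y := e) (w := fderiv ℝ Y y e)
    (κ := -b) (c := δ * ‖e‖ ^ 2) fun i => by
    rw [fderiv_apply_apply_of_binomial hY hZ]
    have hdiag : β i * ((1 + m i) * y i ^ m i) ≤ 0 :=
      mul_nonpos_of_nonpos_of_nonneg (hβ i) (by have := (hm i).pow_nonneg (y i); positivity)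
    have hZe : e i * fderiv ℝ (fun z => Z z i) y e ≤ δ * ‖e‖ ^ 2 :=
      calc e i * fderiv ℝ (fun z => Z z i) y e
          ≤ |e i| * ‖fderiv ℝ (fun z => Z z i) y e‖ := by
            rw [Real.norm_eq_abs, ← abs_mul]; exact le_abs_self _
        _ ≤ ‖e‖ * (δ * ‖e‖) := by
            gcongr
            · exact EuclideanSpace.abs_apply_le_norm e i
            · exact (ContinuousLinearMap.le_opNorm _ e).trans (by gcongr; exact hDZ i)
        _ = δ * ‖e‖ ^ 2 := by ring
    have := mul_le_mul_of_nonneg_right (add_le_add (hα i) hdiag) (sq_nonneg (e i))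
    nlinarith
  linear_combination key

end BinomialVectorField

theorem stmt_14_general (n : ℕ) (a b : ℝ) (hb : 0 < b)
    (α : Fin n → ℝ) (hα : ∀ i, -a ≤ α i ∧ α i ≤ -b)
    (a' b' : ℝ) (hb' : 0 < b')
    (β : Fin n → ℝ) (hβ : ∀ i, -a' ≤ β i ∧ β i ≤ -b')
    (m : Fin n → ℕ) (hme : ∀ i, Even (m i)) (hmp : ∀ i, 0 < m i)
    (m₀ m₀' : ℕ) (hm : ∀ i, m₀ ≤ m i ∧ m i ≤ m₀')
    (c₀' c₀'' c₁' c₁'' : ℝ) (hc₀' : 0 < c₀')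
    (hc₁' : 0 < c₁')
    (Z₃ : EuclideanSpace ℝ (Fin n) → EuclideanSpace ℝ (Fin n))
    (hZdiff : Differentiable ℝ Z₃)
    (hZ0in : ∀ x : EuclideanSpace ℝ (Fin n), ‖x‖ ≤ 1 →
      ∀ i, |Z₃ x i| ≤ c₀' * |x i| ^ (2 + m i))
    (hZ0out : ∀ x : EuclideanSpace ℝ (Fin n), 1 ≤ ‖x‖ →
      ∀ i, |Z₃ x i| ≤ c₀'' * |x i| ^ (1 + m i))
    (hZ1in : ∀ x : EuclideanSpace ℝ (Fin n), ‖x‖ ≤ 1 →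
      ∀ i, ‖fderiv ℝ (fun y => Z₃ y i) x‖ ≤ c₁' * |x i| ^ (1 + m i))
    (hZ1out : ∀ x : EuclideanSpace ℝ (Fin n), 1 ≤ ‖x‖ →
      ∀ i, ‖fderiv ℝ (fun y => Z₃ y i) x‖ ≤ c₁'' * |x i| ^ (m i))
    (c₀ c₁ b₀ : ℝ) (hc₀ : c₀ = max c₀' c₀'') (hc₁ : c₁ = max c₁' c₁'')
    (hb₀ : b₀ = b' - c₀)
    (hb₀pos : 0 < b₀)
    (Y₃ : EuclideanSpace ℝ (Fin n) → EuclideanSpace ℝ (Fin n))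
    (hY₃ : ∀ x i, Y₃ x i = α i * x i + β i * x i ^ (1 + m i) + Z₃ x i)
    (ψ : ℝ → EuclideanSpace ℝ (Fin n) → EuclideanSpace ℝ (Fin n))
    (hψ0 : ∀ x, ψ 0 x = x)
    (hψ : ∀ t ≥ (0:ℝ), ∀ x, HasDerivAt (fun s => ψ s x) (Y₃ (ψ t x)) t)
    (η : EuclideanSpace ℝ (Fin n) → EuclideanSpace ℝ (Fin n) → ℝ → EuclideanSpace ℝ (Fin n))
    (hη0 : ∀ x ν, η x ν 0 = ν)
    (hη : ∀ x ν, ∀ t ≥ (0:ℝ), HasDerivAt (η x ν) (fderiv ℝ Y₃ (ψ t x) (η x ν t)) t) :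
    ∀ ρ > (0:ℝ), ∃ M₁ > (0:ℝ),
      ∀ x : EuclideanSpace ℝ (Fin n), ‖x‖ < ρ → ∀ ν : EuclideanSpace ℝ (Fin n),
        ∀ t ≥ (0:ℝ), ‖η x ν t‖ ≤ M₁ * ‖ν‖ * Real.exp (-b * t) := by
  have hc₁_nonneg : 0 ≤ c₁ := hc₁ ▸ hc₁'.le.trans (le_max_left _ _)
  have hZ (y : EuclideanSpace ℝ (Fin n)) (i : Fin n) : |Z₃ y i| ≤ c₀ * |y i| ^ (1 + m i) :=
    hc₀ ▸ le_max_mul_pow_of_le_one_of_one_le hc₀'.le (abs_nonneg _)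
      (EuclideanSpace.abs_apply_le_norm y i) (by omega) (hZ0in y · i) (hZ0out y · i)
  have hDZ (y : EuclideanSpace ℝ (Fin n)) (i : Fin n) :
      ‖fderiv ℝ (fun z => Z₃ z i) y‖ ≤ c₁ * |y i| ^ m i :=
    hc₁ ▸ le_max_mul_pow_of_le_one_of_one_le hc₁'.le (abs_nonneg _)
      (EuclideanSpace.abs_apply_le_norm y i) (by omega) (hZ1in y · i) (hZ1out y · i)
  intro ρ hρ
  set L := max 1 ρ ^ m₀'
  set D := n * (c₁ * ρ * L)
  refine ⟨exp (D / b), exp_pos _, fun x hx ν t ht => ?_⟩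
  have hψ_decay (s : ℝ) (hs : 0 ≤ s) : ‖ψ s x‖ ≤ ρ * exp (-b * s) := by
    have := norm_le_exp_mul_exp_neg_of_inner_deriv_le hb le_rfl (hψ · · x) (fun s _ => by
      simpa using inner_le_neg_mul_norm_sq_of_binomial hY₃ (hα · |>.2) (hβ · |>.2) hme
        (by linarith) (hZ (ψ s x))) hs
    simp only [zero_div, exp_zero, one_mul, hψ0] at this
    exact this.trans (by gcongr)
  have hDZ_flow (s : ℝ) (hs : 0 ≤ s) (i : Fin n) :
      ‖fderiv ℝ (fun z => Z₃ z i) (ψ s x)‖ ≤ c₁ * (ρ * exp (-b * s) * L) := by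
    have hψi := (EuclideanSpace.abs_apply_le_norm _ i).trans (hψ_decay s hs)
    have hψi_le_ρ : |ψ s x i| ≤ ρ :=
      hψi.trans (mul_le_of_le_one_right hρ.le (exp_le_one_iff.2 (by nlinarith)))
    calc ‖fderiv ℝ (fun z => Z₃ z i) (ψ s x)‖ ≤ c₁ * |ψ s x i| ^ m i := hDZ _ i
      _ ≤ c₁ * (|ψ s x i| * L) := mul_le_mul_of_nonneg_left
          (pow_le_mul_max_one_pow (abs_nonneg _) hψi_le_ρ (hmp i) (hm i).2) hc₁_nonneg
      _ ≤ c₁ * (ρ * exp (-b * s) * L) := by gcongr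
  refine (norm_le_exp_mul_exp_neg_of_inner_deriv_le (D := D) hb (by positivity) (hη x ν)
    (fun s hs => ?_) ht).trans_eq (by rw [hη0])
  have hβ_nonpos (i : Fin n) : β i ≤ 0 := (hβ i).2.trans (neg_nonpos.2 hb'.le)
  refine (inner_fderiv_le_of_binomial hY₃ (hα · |>.2) hβ_nonpos hme (hZdiff _) (hDZ_flow s hs)
    _).trans_eq ?_
  ring

/-- Exponential decay of the first variation of the forward flow
of the perturbed binomial vector field `Y₃(x)ᵢ = αᵢ xᵢ + βᵢ xᵢ^{1+mᵢ} + Z₃ᵢ(x)`. -/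
theorem stmt_14 (n : ℕ) (hn : 1 ≤ n) (a b : ℝ) (hb : 0 < b) (hab : b ≤ a)
    (α : Fin n → ℝ) (hα : ∀ i, -a ≤ α i ∧ α i ≤ -b)
    (a' b' : ℝ) (hb' : 0 < b') (hab' : b' ≤ a')
    (β : Fin n → ℝ) (hβ : ∀ i, -a' ≤ β i ∧ β i ≤ -b')
    (m : Fin n → ℕ) (hme : ∀ i, Even (m i)) (hmp : ∀ i, 0 < m i)
    (m₀ m₀' : ℕ) (hm₀ : 0 < m₀) (hm : ∀ i, m₀ ≤ m i ∧ m i ≤ m₀')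
    (c₀' c₀'' c₁' c₁'' : ℝ) (hc₀' : 0 < c₀') (hc₀'' : 0 < c₀'')
    (hc₁' : 0 < c₁') (hc₁'' : 0 < c₁'')
    (Z₃ : EuclideanSpace ℝ (Fin n) → EuclideanSpace ℝ (Fin n))
    (hZdiff : Differentiable ℝ Z₃)
    (hZ0in : ∀ x : EuclideanSpace ℝ (Fin n), ‖x‖ ≤ 1 →
      ∀ i, |Z₃ x i| ≤ c₀' * |x i| ^ (2 + m i))
    (hZ0out : ∀ x : EuclideanSpace ℝ (Fin n), 1 ≤ ‖x‖ →
      ∀ i, |Z₃ x i| ≤ c₀'' * |x i| ^ (1 + m i))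
    (hZ1in : ∀ x : EuclideanSpace ℝ (Fin n), ‖x‖ ≤ 1 →
      ∀ i, ‖fderiv ℝ (fun y => Z₃ y i) x‖ ≤ c₁' * |x i| ^ (1 + m i))
    (hZ1out : ∀ x : EuclideanSpace ℝ (Fin n), 1 ≤ ‖x‖ →
      ∀ i, ‖fderiv ℝ (fun y => Z₃ y i) x‖ ≤ c₁'' * |x i| ^ (m i))
    (c₀ c₁ b₀ b₁ : ℝ) (hc₀ : c₀ = max c₀' c₀'') (hc₁ : c₁ = max c₁' c₁'')
    (hb₀ : b₀ = b' - c₀) (hb₁ : b₁ = b' * (1 + m₀) - c₁)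
    (hb₀pos : 0 < b₀) (hb₁pos : 0 < b₁)
    (Y₃ : EuclideanSpace ℝ (Fin n) → EuclideanSpace ℝ (Fin n))
    (hY₃ : ∀ x i, Y₃ x i = α i * x i + β i * x i ^ (1 + m i) + Z₃ x i)
    (ψ : ℝ → EuclideanSpace ℝ (Fin n) → EuclideanSpace ℝ (Fin n))
    (hψ0 : ∀ x, ψ 0 x = x)
    (hψ : ∀ t ≥ (0:ℝ), ∀ x, HasDerivAt (fun s => ψ s x) (Y₃ (ψ t x)) t)
    (η : EuclideanSpace ℝ (Fin n) → EuclideanSpace ℝ (Fin n) → ℝ → EuclideanSpace ℝ (Fin n))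
    (hη0 : ∀ x ν, η x ν 0 = ν)
    (hη : ∀ x ν, ∀ t ≥ (0:ℝ), HasDerivAt (η x ν) (fderiv ℝ Y₃ (ψ t x) (η x ν t)) t) :
    ∀ ρ > (0:ℝ), ∃ M₁ > (0:ℝ),
      ∀ x : EuclideanSpace ℝ (Fin n), ‖x‖ < ρ → ∀ ν : EuclideanSpace ℝ (Fin n),
        ∀ t ≥ (0:ℝ), ‖η x ν t‖ ≤ M₁ * ‖ν‖ * Real.exp (-b * t) :=
  stmt_14_general n a b hb α hα a' b' hb' β hβ m hme hmp m₀ m₀' hm c₀' c₀'' c₁' c₁'' hc₀' hc₁' Z₃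
    hZdiff hZ0in hZ0out hZ1in hZ1out c₀ c₁ b₀ hc₀ hc₁ hb₀ hb₀pos Y₃ hY₃ ψ hψ0 hψ η hη0 hη
end

section
/- Let 0 < b ≤ a and α : Fin n → ℝ with −a ≤ αᵢ ≤ −b for all i. Let Z₁ : ℝⁿ → ℝⁿ be differentiable satisfying, for some integer m ≥ 1 and constants c₁′, c₁″ > 0: ‖DZ₁(x)‖ ≤ c₁′‖x‖^{m} for ‖x‖ ≤ 1, and ‖DZ₁(x)‖ ≤ c₁″ for ‖x‖ ≥ 1 (operator norms). Set c₁ = max(c₁′, c₁″) and assume b₁ = b − c₁ > 0. Let ψ be a forward flow of Y₁(x)ᵢ = αᵢ xᵢ + Z₁(x)ᵢ, and let η be a first variation of ψ at x ∈ ℝⁿ with initial vector ν ∈ ℝⁿ. Then ‖η t‖ ≤ ‖ν‖e^{−b₁ t} for all t ≥ 0; in particular ‖η t‖ → 0 as t → ∞, uniformly in x ∈ ℝⁿ and in ν in bounded sets. -/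
/-! Along the flow, `d/dt ‖η‖² = 2⟪DY₁(ψ t x) η, η⟫`, and `DY₁ = diag α + DZ₁` is uniformly
dissipative: `⟪DY₁(y) v, v⟫ ≤ (-b + ‖DZ₁(y)‖) ‖v‖² ≤ -b₁ ‖v‖²`, because `αᵢ ≤ -b` and
`‖DZ₁‖ ≤ c₁` on all of `ℝⁿ`. Hence `‖η t‖² e^{2 b₁ t}` is nonincreasing, which gives the decay
with a rate independent of `x` and `ν`. -/

open scoped RealInnerProductSpace
open Real Filter Topology

theorem norm_le_mul_exp_neg_of_inner_deriv_le {E : Type*} [NormedAddCommGroup E]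
    [InnerProductSpace ℝ E] {u u' : ℝ → E} {β : ℝ}
    (hu : ∀ t ≥ (0 : ℝ), HasDerivAt u (u' t) t)
    (hdiss : ∀ t ≥ (0 : ℝ), ⟪u' t, u t⟫ ≤ -β * ‖u t‖ ^ 2) {t : ℝ} (ht : 0 ≤ t) :
    ‖u t‖ ≤ ‖u 0‖ * exp (-β * t) := by
  set F : ℝ → ℝ := fun s => ‖u s‖ ^ 2 * exp (2 * β * s)
  set F' : ℝ → ℝ := fun s =>
    2 * ⟪u s, u' s⟫ * exp (2 * β * s) + ‖u s‖ ^ 2 * (exp (2 * β * s) * (2 * β))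
  have hF : ∀ s ≥ (0 : ℝ), HasDerivAt F (F' s) s :=
    fun s hs => (hu s hs).norm_sq.mul (((hasDerivAt_id s).const_mul (2 * β)).exp.congr_deriv
      (by simp))
  have hF_anti : AntitoneOn F (Set.Ici 0) := by
    refine antitoneOn_of_hasDerivWithinAt_nonpos (convex_Ici 0) (f' := F')
      (fun s hs => (hF s hs).continuousAt.continuousWithinAt) (fun s hs => ?_) (fun s hs => ?_)
    all_goals rw [interior_Ici] at hs
    · exact (hF s hs.le).hasDerivWithinAt
    · have := hdiss s hs.le
      simp only [F']
      rw [real_inner_comm]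
      nlinarith [exp_pos (2 * β * s)]
  have hFt : ‖u t‖ ^ 2 * exp (2 * β * t) ≤ ‖u 0‖ ^ 2 := by
    simpa [F] using hF_anti Set.self_mem_Ici ht ht
  have hexp : exp (2 * β * t) * exp (-β * t) ^ 2 = 1 := by
    rw [sq, ← exp_add, ← exp_add, ← exp_zero]; ring_nf
  have hsq : ‖u t‖ ^ 2 ≤ (‖u 0‖ * exp (-β * t)) ^ 2 :=
    calc ‖u t‖ ^ 2 = ‖u t‖ ^ 2 * exp (2 * β * t) * exp (-β * t) ^ 2 := by
          rw [mul_assoc, hexp, mul_one]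
      _ ≤ ‖u 0‖ ^ 2 * exp (-β * t) ^ 2 := by gcongr
      _ = (‖u 0‖ * exp (-β * t)) ^ 2 := (mul_pow _ _ _).symm
  exact le_of_pow_le_pow_left₀ two_ne_zero (by positivity) hsq

theorem inner_toEuclideanCLM_diagonal_self_le {ι : Type*} [Fintype ι] [DecidableEq ι]
    {α : ι → ℝ} {b : ℝ} (hα : ∀ i, α i ≤ -b) (v : EuclideanSpace ℝ ι) :
    ⟪Matrix.toEuclideanCLM (𝕜 := ℝ) (Matrix.diagonal α) v, v⟫ ≤ -b * ‖v‖ ^ 2 := by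
  rw [← real_inner_self_eq_norm_sq, real_inner_comm, Matrix.inner_toEuclideanCLM,
    PiLp.inner_apply, Finset.mul_sum]
  simp only [Matrix.mulVec_diagonal, dotProduct, RCLike.inner_apply, conj_trivial]
  exact Finset.sum_le_sum fun i _ => by nlinarith [hα i, mul_self_nonneg (v i)]

theorem real_inner_apply_self_le {E : Type*} [NormedAddCommGroup E] [InnerProductSpace ℝ E]
    (A : E →L[ℝ] E) (v : E) : ⟪A v, v⟫ ≤ ‖A‖ * ‖v‖ ^ 2 :=
  calc ⟪A v, v⟫ ≤ ‖A v‖ * ‖v‖ := real_inner_le_norm _ _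
    _ ≤ ‖A‖ * ‖v‖ * ‖v‖ := by gcongr; exact A.le_opNorm v
    _ = ‖A‖ * ‖v‖ ^ 2 := by ring

theorem inner_fderiv_add_apply_self_le {E : Type*} [NormedAddCommGroup E]
    [InnerProductSpace ℝ E] {L : E →L[ℝ] E} {Z : E → E} {y : E} {b c : ℝ}
    (hZ : DifferentiableAt ℝ Z y) (hL : ∀ v, ⟪L v, v⟫ ≤ -b * ‖v‖ ^ 2)
    (hZc : ‖fderiv ℝ Z y‖ ≤ c) (v : E) :
    ⟪fderiv ℝ (fun x => L x + Z x) y v, v⟫ ≤ -(b - c) * ‖v‖ ^ 2 := by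
  have hY : HasFDerivAt (fun x => L x + Z x) (L + fderiv ℝ Z y) y :=
    L.hasFDerivAt.add hZ.hasFDerivAt
  rw [hY.fderiv, add_apply, inner_add_left]
  have hZv := real_inner_apply_self_le (fderiv ℝ Z y) v
  nlinarith [hL v, sq_nonneg ‖v‖]

theorem norm_le_max_of_norm_le_mul_pow {E F : Type*} [SeminormedAddGroup E] [Norm F] {f : E → F}
    {c' c'' : ℝ} {m : ℕ} (hc' : 0 ≤ c') (hin : ∀ x, ‖x‖ ≤ 1 → ‖f x‖ ≤ c' * ‖x‖ ^ m)
    (hout : ∀ x, 1 ≤ ‖x‖ → ‖f x‖ ≤ c'') (x : E) : ‖f x‖ ≤ max c' c'' := by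
  rcases le_total ‖x‖ 1 with hx | hx
  · calc ‖f x‖ ≤ c' * ‖x‖ ^ m := hin x hx
      _ ≤ c' := mul_le_of_le_one_right hc' (pow_le_one₀ (norm_nonneg x) hx)
      _ ≤ max c' c'' := le_max_left _ _
  · exact (hout x hx).trans (le_max_right _ _)

theorem stmt_16_general (n : ℕ) (a b : ℝ)
    (α : Fin n → ℝ) (hα : ∀ i, -a ≤ α i ∧ α i ≤ -b)
    (m : ℕ) (c₁' c₁'' : ℝ) (hc₁' : 0 < c₁')
    (Z₁ : EuclideanSpace ℝ (Fin n) → EuclideanSpace ℝ (Fin n))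
    (hZdiff : Differentiable ℝ Z₁)
    (hZ1in : ∀ x : EuclideanSpace ℝ (Fin n), ‖x‖ ≤ 1 → ‖fderiv ℝ Z₁ x‖ ≤ c₁' * ‖x‖ ^ m)
    (hZ1out : ∀ x : EuclideanSpace ℝ (Fin n), 1 ≤ ‖x‖ → ‖fderiv ℝ Z₁ x‖ ≤ c₁'')
    (c₁ b₁ : ℝ) (hc₁ : c₁ = max c₁' c₁'') (hb₁ : b₁ = b - c₁) (hb₁pos : 0 < b₁)
    (Y₁ : EuclideanSpace ℝ (Fin n) → EuclideanSpace ℝ (Fin n))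
    (hY₁ : ∀ x i, Y₁ x i = α i * x i + Z₁ x i)
    (ψ : ℝ → EuclideanSpace ℝ (Fin n) → EuclideanSpace ℝ (Fin n))
    (η : EuclideanSpace ℝ (Fin n) → EuclideanSpace ℝ (Fin n) → ℝ → EuclideanSpace ℝ (Fin n))
    (hη0 : ∀ x ν, η x ν 0 = ν)
    (hη : ∀ x ν, ∀ t ≥ (0:ℝ), HasDerivAt (η x ν) (fderiv ℝ Y₁ (ψ t x) (η x ν t)) t) :
    (∀ x ν : EuclideanSpace ℝ (Fin n), ∀ t ≥ (0:ℝ),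
      ‖η x ν t‖ ≤ ‖ν‖ * Real.exp (-b₁ * t)) ∧
    (∀ C > (0:ℝ), ∀ ε > (0:ℝ), ∃ T : ℝ, ∀ t ≥ T,
      ∀ x ν : EuclideanSpace ℝ (Fin n), ‖ν‖ ≤ C → ‖η x ν t‖ ≤ ε) := by
  have hZc : ∀ y, ‖fderiv ℝ Z₁ y‖ ≤ c₁ :=
    hc₁ ▸ norm_le_max_of_norm_le_mul_pow hc₁'.le hZ1in hZ1out
  have hY : Y₁ = fun x => Matrix.toEuclideanCLM (𝕜 := ℝ) (Matrix.diagonal α) x + Z₁ x := by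
    funext x; ext i; simp [hY₁, Matrix.mulVec_diagonal]
  have hdiss : ∀ y v, ⟪fderiv ℝ Y₁ y v, v⟫ ≤ -b₁ * ‖v‖ ^ 2 := fun y v => by
    rw [hY, hb₁]
    exact inner_fderiv_add_apply_self_le (hZdiff y)
      (inner_toEuclideanCLM_diagonal_self_le fun i => (hα i).2) (hZc y) v
  have hdecay : ∀ x ν, ∀ t ≥ (0 : ℝ), ‖η x ν t‖ ≤ ‖ν‖ * exp (-b₁ * t) := fun x ν t ht => by
    simpa only [hη0] using norm_le_mul_exp_neg_of_inner_deriv_le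
      (u' := fun s => fderiv ℝ Y₁ (ψ s x) (η x ν s)) (hη x ν) (fun s _ => hdiss _ _) ht
  refine ⟨hdecay, fun C _ ε hε => ?_⟩
  have hlim : Tendsto (fun t => C * exp (-b₁ * t)) atTop (𝓝 0) := by
    simpa using (tendsto_exp_neg_atTop_nhds_zero.comp
      (tendsto_id.const_mul_atTop hb₁pos)).const_mul C
  obtain ⟨T, hT⟩ := eventually_atTop.1
    ((hlim.eventually (ge_mem_nhds hε)).and (eventually_ge_atTop 0))
  exact ⟨T, fun t ht x ν hν => (hdecay x ν t (hT t ht).2).trans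
    ((mul_le_mul_of_nonneg_right hν (exp_pos _).le).trans (hT t ht).1)⟩

/-- Exponential decay of the first variation of the forward flow
of `Y₁(x)ᵢ = αᵢ xᵢ + Z₁(x)ᵢ`, uniformly in `x ∈ ℝⁿ` and in `ν` in bounded sets. -/
theorem stmt_16 (n : ℕ) (hn : 1 ≤ n) (a b : ℝ) (hb : 0 < b) (hab : b ≤ a)
    (α : Fin n → ℝ) (hα : ∀ i, -a ≤ α i ∧ α i ≤ -b)
    (m : ℕ) (hm : 1 ≤ m) (c₁' c₁'' : ℝ) (hc₁' : 0 < c₁') (hc₁'' : 0 < c₁'')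
    (Z₁ : EuclideanSpace ℝ (Fin n) → EuclideanSpace ℝ (Fin n))
    (hZdiff : Differentiable ℝ Z₁)
    (hZ1in : ∀ x : EuclideanSpace ℝ (Fin n), ‖x‖ ≤ 1 → ‖fderiv ℝ Z₁ x‖ ≤ c₁' * ‖x‖ ^ m)
    (hZ1out : ∀ x : EuclideanSpace ℝ (Fin n), 1 ≤ ‖x‖ → ‖fderiv ℝ Z₁ x‖ ≤ c₁'')
    (c₁ b₁ : ℝ) (hc₁ : c₁ = max c₁' c₁'') (hb₁ : b₁ = b - c₁) (hb₁pos : 0 < b₁)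
    (Y₁ : EuclideanSpace ℝ (Fin n) → EuclideanSpace ℝ (Fin n))
    (hY₁ : ∀ x i, Y₁ x i = α i * x i + Z₁ x i)
    (ψ : ℝ → EuclideanSpace ℝ (Fin n) → EuclideanSpace ℝ (Fin n))
    (hψ0 : ∀ x, ψ 0 x = x)
    (hψ : ∀ t ≥ (0:ℝ), ∀ x, HasDerivAt (fun s => ψ s x) (Y₁ (ψ t x)) t)
    (η : EuclideanSpace ℝ (Fin n) → EuclideanSpace ℝ (Fin n) → ℝ → EuclideanSpace ℝ (Fin n))
    (hη0 : ∀ x ν, η x ν 0 = ν)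
    (hη : ∀ x ν, ∀ t ≥ (0:ℝ), HasDerivAt (η x ν) (fderiv ℝ Y₁ (ψ t x) (η x ν t)) t) :
    (∀ x ν : EuclideanSpace ℝ (Fin n), ∀ t ≥ (0:ℝ),
      ‖η x ν t‖ ≤ ‖ν‖ * Real.exp (-b₁ * t)) ∧
    (∀ C > (0:ℝ), ∀ ε > (0:ℝ), ∃ T : ℝ, ∀ t ≥ T,
      ∀ x ν : EuclideanSpace ℝ (Fin n), ‖ν‖ ≤ C → ‖η x ν t‖ ≤ ε) :=
  stmt_16_general n a b α hα m c₁' c₁'' hc₁' Z₁ hZdiff hZ1in hZ1out c₁ b₁ hc₁ hb₁ hb₁pos Y₁ hY₁ ψ η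
    hη0 hη
end
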